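/- arXiv:2104.00187 — 7 statements merged into one kernel-verified Lean document; each statement's English description precedes it below -/
import Mathlib

section
/- Let X be an mm-space. Then Aut(X) is compact with respect to the Ky Fan metric: every sequence (φ_i) in Aut(X) admits a subsequence (φ_{i_j}) and an element φ ∈ Aut(X) such that φ_{i_j} converges to φ in μ_X-measure (equivalently, d_KF^{μ_X}(φ_{i_j}, φ) → 0). -/
open MeasureTheory Metric Filter Set TopologicalSpace
open scoped ENNReal Topology

noncomputable section

/-- The Ky Fan distance between two maps with respect to a measure:
`inf { ε ≥ 0 | μ {ω | d(u ω, u' ω) > ε} ≤ ε }`. -/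
def kyFan {Ω : Type*} [MeasurableSpace Ω] (μ : Measure Ω)
    {Z : Type*} [PseudoMetricSpace Z] (u u' : Ω → Z) : ℝ :=
  sInf {ε : ℝ | 0 ≤ ε ∧ μ {ω | ε < dist (u ω) (u' ω)} ≤ ENNReal.ofReal ε}

/-- `g` is an automorphism of the mm-space `(X, d, μ)`: a bijective isometry
preserving the measure. -/
def IsAut {X : Type*} [MetricSpace X] [MeasurableSpace X] (μ : Measure X) (g : X → X) : Prop :=
  Isometry g ∧ Function.Bijective g ∧ Measure.map g μ = μ

/-- `G` is a subgroup of `Aut(X)` that is closed with respect to the Ky Fan metric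
(equivalently, under convergence in `μ`-measure). -/
def IsClosedAutSubgroup {X : Type*} [MetricSpace X] [MeasurableSpace X]
    (μ : Measure X) (G : Set (X → X)) : Prop :=
  (∀ g ∈ G, IsAut μ g) ∧ (id ∈ G) ∧ (∀ g ∈ G, ∀ g' ∈ G, g ∘ g' ∈ G) ∧
  (∀ g ∈ G, ∃ g' ∈ G, g' ∘ g = id ∧ g ∘ g' = id) ∧
  (∀ (gs : ℕ → X → X) (g : X → X), (∀ n, gs n ∈ G) → IsAut μ g →
    Tendsto (fun n => kyFan μ (gs n) g) atTop (𝓝 0) → g ∈ G)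

/-- Couplings between two measures: measures on the product with the given marginals. -/
def couplings {X Y : Type*} [MeasurableSpace X] [MeasurableSpace Y]
    (μ : Measure X) (ν : Measure Y) : Set (Measure (X × Y)) :=
  {π | π.map Prod.fst = μ ∧ π.map Prod.snd = ν}

/-- The support of a Borel measure: points all of whose open neighborhoods have
positive measure. -/
def msupport {Z : Type*} [TopologicalSpace Z] [MeasurableSpace Z] (π : Measure Z) : Set Z :=
  {z | ∀ U : Set Z, IsOpen U → z ∈ U → 0 < π U}

/-- `d^S(g,h) = sup_{((x₁,y₁),(x₂,y₂)) ∈ S × S} |d_X(g x₁, x₂) - d_Y(h y₁, y₂)|`,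
with value `0` for `S = ∅`. -/
def dS {X Y : Type*} [MetricSpace X] [MetricSpace Y]
    (S : Set (X × Y)) (g : X → X) (h : Y → Y) : ℝ≥0∞ :=
  ⨆ p ∈ S ×ˢ S, ENNReal.ofReal |dist (g p.1.1) p.2.1 - dist (h p.1.2) p.2.2|

/-- `d^π(g,h) = inf { max(1 - π S, d^S(g,h)) | S ⊆ supp π closed }`. -/
def dPi {X Y : Type*} [MetricSpace X] [MetricSpace Y] [MeasurableSpace X] [MeasurableSpace Y]
    (π : Measure (X × Y)) (g : X → X) (h : Y → Y) : ℝ≥0∞ :=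
  ⨅ S ∈ {S : Set (X × Y) | IsClosed S ∧ S ⊆ msupport π}, max (1 - π S) (dS S g h)

/-- `□^π((X,G),(Y,H))`: the Hausdorff distance between `G` and `H` w.r.t. `d^π`. -/
def boxPi {X Y : Type*} [MetricSpace X] [MetricSpace Y] [MeasurableSpace X] [MeasurableSpace Y]
    (π : Measure (X × Y)) (G : Set (X → X)) (H : Set (Y → Y)) : ℝ≥0∞ :=
  max (⨆ g ∈ G, ⨅ h ∈ H, dPi π g h) (⨆ h ∈ H, ⨅ g ∈ G, dPi π g h)

/-- The equivariant box distance `□((X,G),(Y,H)) = inf_{π ∈ Π(μ,ν)} □^π((X,G),(Y,H))`. -/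
def eqBox {X Y : Type*} [MetricSpace X] [MetricSpace Y] [MeasurableSpace X] [MeasurableSpace Y]
    (μ : Measure X) (ν : Measure Y) (G : Set (X → X)) (H : Set (Y → Y)) : ℝ≥0∞ :=
  ⨅ π ∈ couplings μ ν, boxPi π G H

/-- The set of real-valued 1-Lipschitz functions. -/
def Lip1 (X : Type*) [PseudoMetricSpace X] : Set (X → ℝ) := {f | LipschitzWith 1 f}

/-- `ρ^π_{g,h}(f,f') = max( d_KF^π(f∘p₁, f'∘p₂), d_KF^π(f∘g∘p₁, f'∘h∘p₂) )`. -/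
def rhoPair {X Y : Type*} [MetricSpace X] [MetricSpace Y] [MeasurableSpace X] [MeasurableSpace Y]
    (π : Measure (X × Y)) (g : X → X) (h : Y → Y) (f : X → ℝ) (f' : Y → ℝ) : ℝ :=
  max (kyFan π (fun p => f p.1) (fun p => f' p.2))
      (kyFan π (fun p => f (g p.1)) (fun p => f' (h p.2)))

/-- `ρ^π(g,h)`: the Hausdorff distance between `Lip₁(X)` and `Lip₁(Y)` w.r.t. `ρ^π_{g,h}`. -/
def rhoPi {X Y : Type*} [MetricSpace X] [MetricSpace Y] [MeasurableSpace X] [MeasurableSpace Y]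
    (π : Measure (X × Y)) (g : X → X) (h : Y → Y) : ℝ :=
  max (sSup ((fun f => sInf ((fun f' => rhoPair π g h f f') '' (Lip1 Y))) '' (Lip1 X)))
      (sSup ((fun f' => sInf ((fun f => rhoPair π g h f f') '' (Lip1 X))) '' (Lip1 Y)))

/-- `d_conc^π((X,G),(Y,H))`: the Hausdorff distance between `G` and `H` w.r.t. `ρ^π`. -/
def dconcPi {X Y : Type*} [MetricSpace X] [MetricSpace Y] [MeasurableSpace X] [MeasurableSpace Y]
    (π : Measure (X × Y)) (G : Set (X → X)) (H : Set (Y → Y)) : ℝ :=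
  max (sSup ((fun g => sInf ((fun h => rhoPi π g h) '' H)) '' G)) (sSup ((fun h => sInf ((fun g => rhoPi π g h) '' G)) '' H))

/-- The equivariant observable distance
`d_conc((X,G),(Y,H)) = inf_{π ∈ Π(μ,ν)} d_conc^π((X,G),(Y,H))`. -/
def eqDconc {X Y : Type*} [MetricSpace X] [MetricSpace Y] [MeasurableSpace X] [MeasurableSpace Y]
    (μ : Measure X) (ν : Measure Y) (G : Set (X → X)) (H : Set (Y → Y)) : ℝ :=
  sInf ((fun π => dconcPi π G H) '' (couplings μ ν))

/-- `(X,G)` and `(Y,H)` are equivariantly mm-isomorphic: there is a measure-preserving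
bijective isometry `φ : X → Y` equivariant with respect to a group isomorphism `G → H`. -/
def EquivMMIso {X Y : Type*} [MetricSpace X] [MetricSpace Y] [MeasurableSpace X] [MeasurableSpace Y]
    (μ : Measure X) (ν : Measure Y) (G : Set (X → X)) (H : Set (Y → Y)) : Prop :=
  ∃ φ : X → Y, Isometry φ ∧ Function.Bijective φ ∧ Measure.map φ μ = ν ∧
    ∃ ρ : (X → X) → (Y → Y), Set.BijOn ρ G H ∧
      (∀ g ∈ G, ∀ g' ∈ G, ρ (g ∘ g') = ρ g ∘ ρ g') ∧
      (∀ g ∈ G, ∀ x, φ (g x) = ρ g (φ x))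

/-- The Prokhorov (Lévy–Prokhorov) distance between two Borel measures. -/
def prokhorov {X : Type*} [PseudoMetricSpace X] [MeasurableSpace X] (μ ν : Measure X) : ℝ :=
  sInf {ε : ℝ | 0 < ε ∧ ∀ A : Set X, MeasurableSet A →
    μ A ≤ ν (Metric.thickening ε A) + ENNReal.ofReal ε ∧
    ν A ≤ μ (Metric.thickening ε A) + ENNReal.ofReal ε}

/-- The κ-observable diameter `ObsDiam(X;-κ) = sup_{f ∈ Lip₁(X)} diam(f_*μ; -κ)`. -/
def obsDiam {X : Type*} [MetricSpace X] [MeasurableSpace X] (μ : Measure X) (κ : ℝ) : ℝ≥0∞ :=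
  ⨆ f ∈ Lip1 X,
    ⨅ A ∈ {A : Set ℝ | MeasurableSet A ∧ 1 - ENNReal.ofReal κ ≤ μ.map f A}, EMetric.diam A

/-- Weak Hausdorff convergence of a sequence of (closed) subsets, with the
convention `d(x, ∅) = ∞` (via `EMetric.infEdist`). -/
def WeakHausTendsto {X : Type*} [MetricSpace X] (S : ℕ → Set X) (T : Set X) : Prop :=
  (∀ x ∈ T, Tendsto (fun n => EMetric.infEdist x (S n)) atTop (𝓝 0)) ∧
  (∀ x ∉ T, 0 < Filter.liminf (fun n => EMetric.infEdist x (S n)) atTop)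




lemma tb_prod {X Y : Type*} [PseudoMetricSpace X] [PseudoMetricSpace Y] {s : Set X} {t : Set Y}
    (hs : TotallyBounded s) (ht : TotallyBounded t) : TotallyBounded (s ×ˢ t) := by
  rw [Metric.totallyBounded_iff] at hs ht ⊢
  intro ε hε
  obtain ⟨ts, hts, hcs⟩ := hs ε hε
  obtain ⟨tt, htt, hct⟩ := ht ε hε
  refine ⟨ts ×ˢ tt, hts.prod htt, ?_⟩
  rintro ⟨x, y⟩ ⟨hx, hy⟩
  obtain ⟨cx, hcx, hxb⟩ := Set.mem_iUnion₂.mp (hcs hx)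
  obtain ⟨cy, hcy, hyb⟩ := Set.mem_iUnion₂.mp (hct hy)
  refine Set.mem_biUnion (Set.mk_mem_prod hcx hcy) ?_
  rw [← ball_prod_same]
  exact Set.mk_mem_prod hxb hyb

lemma tb_of_ball {X : Type*} [MetricSpace X] [MeasurableSpace X] [OpensMeasurableSpace X]
    (μ : Measure X) [IsProbabilityMeasure μ]
    (s : Set X) (h : ∀ r : ℝ, 0 < r → ∃ c : ℝ≥0∞, 0 < c ∧ ∀ a ∈ s, c ≤ μ (Metric.ball a r)) :
    TotallyBounded s := by
  rw [Metric.totallyBounded_iff]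
  by_contra hcon
  push_neg at hcon
  obtain ⟨ε, hε, hcov⟩ := hcon
  classical
  obtain ⟨c, hc0, hball⟩ := h (ε / 2) (by linarith)
  have key : ∀ t : Finset X, ∃ z ∈ s, ∀ y ∈ t, ε ≤ dist z y := by
    intro t
    obtain ⟨z, hzs, hz⟩ := Set.not_subset.mp (hcov (↑t) t.finite_toSet)
    refine ⟨z, hzs, fun y hy => ?_⟩
    by_contra hlt
    push_neg at hlt
    exact hz (Set.mem_biUnion (Finset.mem_coe.mpr hy)
      (by simpa [Metric.mem_ball, dist_comm] using hlt))
  choose F hFs hFsep using key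
  let g : ℕ → Finset X := fun n => Nat.rec ∅ (fun _ t => insert (F t) t) n
  have hg_succ : ∀ n, g (n + 1) = insert (F (g n)) (g n) := fun _ => rfl
  have hg_mono : ∀ {m n : ℕ}, m ≤ n → g m ⊆ g n := by
    intro m n h
    induction h with
    | refl => exact Finset.Subset.refl _
    | step _ ih => exact ih.trans (by rw [hg_succ]; exact Finset.subset_insert _ _)
  set a : ℕ → X := fun n => F (g n) with ha
  have hsep : ∀ {m n : ℕ}, m < n → ε ≤ dist (a n) (a m) := by
    intro m n hmn
    exact hFsep (g n) (a m) (hg_mono hmn (by rw [hg_succ]; exact Finset.mem_insert_self _ _))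
  have hdisj : Set.PairwiseDisjoint (Set.univ : Set ℕ) (fun n => Metric.ball (a n) (ε / 2)) := by
    intro i _ j _ hij
    have hle : ε ≤ dist (a i) (a j) := by
      rcases hij.lt_or_gt with h | h
      · rw [dist_comm]; exact hsep h
      · exact hsep h
    refine Set.disjoint_left.mpr fun z hzi hzj => ?_
    rw [Metric.mem_ball] at hzi hzj
    have h1 := dist_triangle (a i) z (a j)
    have h2 : dist (a i) z = dist z (a i) := dist_comm _ _
    linarith
  have hN : ∀ N : ℕ, (N : ℝ≥0∞) * c ≤ 1 := by
    intro N
    have hmeas : ∀ n ∈ Finset.range N, MeasurableSet (Metric.ball (a n) (ε / 2)) :=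
      fun n _ => measurableSet_ball
    have hsum := measure_biUnion_finset (μ := μ) (hdisj.subset (Set.subset_univ _)) hmeas
    calc (N : ℝ≥0∞) * c = ∑ _n ∈ Finset.range N, c := by
          simp [Finset.sum_const, nsmul_eq_mul]
      _ ≤ ∑ n ∈ Finset.range N, μ (Metric.ball (a n) (ε / 2)) :=
          Finset.sum_le_sum fun n _ => hball (a n) (hFs _)
      _ = μ (⋃ n ∈ Finset.range N, Metric.ball (a n) (ε / 2)) := hsum.symm
      _ ≤ μ Set.univ := measure_mono (Set.subset_univ _)
      _ = 1 := measure_univ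
  have hcT : c ≠ ⊤ := by
    refine ne_top_of_le_ne_top ?_ (hball (a 0) (hFs _))
    exact measure_ne_top μ _
  obtain ⟨N, hNgt⟩ := ENNReal.exists_nat_gt (ENNReal.div_lt_top ENNReal.one_ne_top hc0.ne').ne
  have hlt : (1 : ℝ≥0∞) < (N : ℝ≥0∞) * c := by
    rwa [ENNReal.div_lt_iff (Or.inl hc0.ne') (Or.inl hcT)] at hNgt
  exact absurd (hN N) (not_le.mpr hlt)

lemma exists_ptwise_limit {X : Type*} [MetricSpace X] [CompleteSpace X]
    (f : ℕ → X → X) (hf : ∀ j, Isometry (f j)) (u : ℕ → X) (hu : DenseRange u)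
    (h : ∀ n, ∃ L, Tendsto (fun j => f j (u n)) atTop (𝓝 L)) (x : X) :
    ∃ L, Tendsto (fun j => f j x) atTop (𝓝 L) := by
  apply cauchySeq_tendsto_of_complete
  rw [Metric.cauchySeq_iff]
  intro ε hε
  obtain ⟨n, hn⟩ := Metric.denseRange_iff.mp hu x (ε / 3) (by linarith)
  obtain ⟨L, hL⟩ := h n
  obtain ⟨N, hNc⟩ := Metric.cauchySeq_iff.mp hL.cauchySeq (ε / 3) (by linarith)
  refine ⟨N, fun b hb a ha => ?_⟩
  have h1 : dist (f b x) (f b (u n)) = dist x (u n) := (hf b).dist_eq _ _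
  have h2 : dist (f a (u n)) (f a x) = dist (u n) x := (hf a).dist_eq _ _
  have h3 := hNc b hb a ha
  have h4 := dist_triangle4 (f b x) (f b (u n)) (f a (u n)) (f a x)
  have h5 : dist x (u n) = dist (u n) x := dist_comm _ _
  linarith [hn]

lemma map_le_on_open {X : Type*} [MetricSpace X] [MeasurableSpace X] [BorelSpace X]
    (μ : Measure X) (f : ℕ → X → X) (g : X → X)
    (hfm : ∀ j, Measurable (f j)) (hmap : ∀ j, Measure.map (f j) μ = μ)
    (hconv : ∀ x, Tendsto (fun j => f j x) atTop (𝓝 (g x)))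
    (U : Set X) (hU : IsOpen U) : μ (g ⁻¹' U) ≤ μ U := by
  set A : ℕ → Set X := fun N => ⋂ (j : ℕ) (_ : N ≤ j), f j ⁻¹' U with hA
  have hmono : Monotone A := by
    intro m n hmn
    exact Set.iInter₂_mono' fun j hj => ⟨j, hmn.trans hj, le_refl _⟩
  have hsub : g ⁻¹' U ⊆ ⋃ N, A N := by
    intro x hx
    have : ∀ᶠ j in atTop, f j x ∈ U := (hconv x).eventually (hU.mem_nhds hx)
    obtain ⟨N, hN⟩ := eventually_atTop.mp this
    exact Set.mem_iUnion.mpr ⟨N, Set.mem_iInter₂.mpr fun j hj => hN j hj⟩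
  calc μ (g ⁻¹' U) ≤ μ (⋃ N, A N) := measure_mono hsub
    _ = ⨆ N, μ (A N) := (hmono.directed_le).measure_iUnion
    _ ≤ μ U := by
        refine iSup_le fun N => ?_
        have hAN : A N ⊆ f N ⁻¹' U := fun x hx => Set.mem_iInter₂.mp hx N (le_refl _)
        have : μ (f N ⁻¹' U) = μ U := by
          conv_rhs => rw [← hmap N]
          rw [Measure.map_apply (hfm N) hU.measurableSet]
        exact (measure_mono hAN).trans this.le

lemma meas_ext_open {X : Type*} [MetricSpace X] [MeasurableSpace X] [BorelSpace X]
    (μ ν : Measure X) [IsProbabilityMeasure μ] [IsProbabilityMeasure ν]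
    (h : ∀ U : Set X, IsOpen U → μ U = ν U) : μ = ν := by
  refine MeasureTheory.ext_of_generate_finite {s : Set X | IsOpen s} ?_ ?_ (fun s hs => h s hs) ?_
  · rw [BorelSpace.measurable_eq (α := X)]; rfl
  · exact fun s hs t ht _ => hs.inter ht
  · simp


/-- `Aut(X)` is compact with respect to the Ky Fan metric: every sequence
has a subsequence converging in measure (equivalently, in Ky Fan distance) to an
element of `Aut(X)`. -/
theorem stmt_2 {X : Type*} [MetricSpace X] [CompleteSpace X] [SeparableSpace X] [MeasurableSpace X] [BorelSpace X]
    (μ : Measure X) [IsProbabilityMeasure μ] [μ.IsOpenPosMeasure]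
    (φs : ℕ → X → X) (hφs : ∀ i, IsAut μ (φs i)) :
    ∃ ι : ℕ → ℕ, StrictMono ι ∧ ∃ φ : X → X, IsAut μ φ ∧
      (∀ ε : ℝ, 0 < ε →
        Tendsto (fun j => μ {x : X | ε < dist (φs (ι j) x) (φ x)}) atTop (𝓝 0)) ∧
      Tendsto (fun j => kyFan μ (φs (ι j)) φ) atTop (𝓝 0) := by
  haveI : SecondCountableTopology X := UniformSpace.secondCountable_of_separable X
  haveI : Nonempty X := by
    by_contra h
    rw [not_nonempty_iff] at h
    have h1 : μ Set.univ = 1 := measure_univ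
    rw [Set.univ_eq_empty_iff.mpr h, measure_empty] at h1
    exact zero_ne_one h1
  -- the inverse automorphisms
  set ψs : ℕ → X → X := fun i => Function.invFun (φs i) with hψs
  have hinv_l : ∀ i, Function.LeftInverse (ψs i) (φs i) :=
    fun i => Function.leftInverse_invFun (hφs i).2.1.1
  have hinv_r : ∀ i, Function.RightInverse (ψs i) (φs i) :=
    fun i => Function.rightInverse_invFun (hφs i).2.1.2
  have hψiso : ∀ i, Isometry (ψs i) := by
    intro i a b
    have h := (hφs i).1 (ψs i a) (ψs i b)
    rw [hinv_r i a, hinv_r i b] at h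
    exact h.symm
  have hφmeas : ∀ i, Measurable (φs i) := fun i => (hφs i).1.continuous.measurable
  have hψmeas : ∀ i, Measurable (ψs i) := fun i => (hψiso i).continuous.measurable
  have hψmap : ∀ i, Measure.map (ψs i) μ = μ := by
    intro i
    have h1 : Measure.map (ψs i) (Measure.map (φs i) μ) = μ := by
      rw [Measure.map_map (hψmeas i) (hφmeas i)]
      have : ψs i ∘ φs i = id := funext (hinv_l i)
      rw [this, Measure.map_id]
    rwa [(hφs i).2.2] at h1
  -- measure of balls around orbits is uniform
  have hballeq : ∀ (f : X → X), Isometry f → Measure.map f μ = μ →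
      ∀ (x : X) (r : ℝ), μ (Metric.ball (f x) r) = μ (Metric.ball x r) := by
    intro f hiso hmap x r
    have hpre : f ⁻¹' Metric.ball (f x) r = Metric.ball x r := by
      ext y
      simp [Metric.mem_ball, hiso.dist_eq]
    conv_lhs => rw [← hmap]
    rw [Measure.map_apply hiso.continuous.measurable measurableSet_ball, hpre]
  have htb : ∀ (f : ℕ → X → X), (∀ i, Isometry (f i)) → (∀ i, Measure.map (f i) μ = μ) →
      ∀ x : X, TotallyBounded (Set.range fun i => f i x) := by
    intro f hiso hmap x
    apply tb_of_ball μ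
    intro r hr
    refine ⟨μ (Metric.ball x r), ?_, ?_⟩
    · exact Metric.isOpen_ball.measure_pos μ (Metric.nonempty_ball.mpr hr)
    · rintro a ⟨i, rfl⟩
      exact (hballeq (f i) (hiso i) (hmap i) x r).ge
  -- dense sequence
  obtain ⟨u, hu⟩ := TopologicalSpace.exists_dense_seq X
  -- compact sets containing the orbits of the pairs
  set K : ℕ → Set (X × X) := fun n =>
    closure ((Set.range fun i => φs i (u n)) ×ˢ (Set.range fun i => ψs i (u n))) with hK
  have hKc : ∀ n, IsCompact (K n) := by
    intro n
    refine TotallyBounded.isCompact_of_isClosed ?_ isClosed_closure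
    exact (tb_prod (htb φs (fun i => (hφs i).1) (fun i => (hφs i).2.2) (u n))
      (htb ψs hψiso hψmap (u n))).closure
  set F : ℕ → ∀ _ : ℕ, X × X := fun i n => (φs i (u n), ψs i (u n)) with hF
  have hFmem : ∀ i, F i ∈ Set.pi Set.univ K := by
    intro i n _
    exact subset_closure (Set.mk_mem_prod ⟨i, rfl⟩ ⟨i, rfl⟩)
  obtain ⟨L, _, ι, hι, hFconv⟩ := (isCompact_univ_pi hKc).tendsto_subseq hFmem
  refine ⟨ι, hι, ?_⟩
  have hconvn : ∀ n, Tendsto (fun j => φs (ι j) (u n)) atTop (𝓝 (L n).1) ∧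
      Tendsto (fun j => ψs (ι j) (u n)) atTop (𝓝 (L n).2) := by
    intro n
    have h1 : Tendsto (fun j => F (ι j) n) atTop (𝓝 (L n)) :=
      (tendsto_pi_nhds.mp hFconv) n
    exact ⟨(continuous_fst.tendsto _).comp h1, (continuous_snd.tendsto _).comp h1⟩
  -- pointwise limits everywhere
  have hφlim : ∀ x, ∃ Lx, Tendsto (fun j => φs (ι j) x) atTop (𝓝 Lx) :=
    exists_ptwise_limit _ (fun j => (hφs (ι j)).1) u hu (fun n => ⟨(L n).1, (hconvn n).1⟩)
  have hψlim : ∀ x, ∃ Lx, Tendsto (fun j => ψs (ι j) x) atTop (𝓝 Lx) :=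
    exists_ptwise_limit _ (fun j => hψiso (ι j)) u hu (fun n => ⟨(L n).2, (hconvn n).2⟩)
  choose φ hφ using hφlim
  choose ψ hψ using hψlim
  -- φ is an isometry
  have hφiso : Isometry φ := by
    refine Isometry.of_dist_eq fun x y => ?_
    have h1 : Tendsto (fun j => dist (φs (ι j) x) (φs (ι j) y)) atTop (𝓝 (dist (φ x) (φ y))) :=
      (hφ x).dist (hφ y)
    have h2 : (fun j => dist (φs (ι j) x) (φs (ι j) y)) = fun _ => dist x y :=
      funext fun j => (hφs (ι j)).1.dist_eq x y
    rw [h2] at h1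
    exact tendsto_nhds_unique h1 tendsto_const_nhds
  have hψiso' : Isometry ψ := by
    refine Isometry.of_dist_eq fun x y => ?_
    have h1 : Tendsto (fun j => dist (ψs (ι j) x) (ψs (ι j) y)) atTop (𝓝 (dist (ψ x) (ψ y))) :=
      (hψ x).dist (hψ y)
    have h2 : (fun j => dist (ψs (ι j) x) (ψs (ι j) y)) = fun _ => dist x y :=
      funext fun j => (hψiso (ι j)).dist_eq x y
    rw [h2] at h1
    exact tendsto_nhds_unique h1 tendsto_const_nhds
  -- inverse relations
  have hcomp : ∀ (f g : ℕ → X → X) (f' g' : X → X), (∀ j, Isometry (f j)) →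
      (∀ x, Tendsto (fun j => f j x) atTop (𝓝 (f' x))) →
      (∀ x, Tendsto (fun j => g j x) atTop (𝓝 (g' x))) →
      ∀ x, Tendsto (fun j => f j (g j x)) atTop (𝓝 (f' (g' x))) := by
    intro f g f' g' hfiso hfc hgc x
    rw [tendsto_iff_dist_tendsto_zero]
    have hb : ∀ j, dist (f j (g j x)) (f' (g' x)) ≤
        dist (g j x) (g' x) + dist (f j (g' x)) (f' (g' x)) := by
      intro j
      calc dist (f j (g j x)) (f' (g' x))
          ≤ dist (f j (g j x)) (f j (g' x)) + dist (f j (g' x)) (f' (g' x)) :=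
            dist_triangle _ _ _
        _ = dist (g j x) (g' x) + dist (f j (g' x)) (f' (g' x)) := by
            rw [(hfiso j).dist_eq]
    have h0 : Tendsto (fun j => dist (g j x) (g' x) + dist (f j (g' x)) (f' (g' x)))
        atTop (𝓝 0) := by
      have := (tendsto_iff_dist_tendsto_zero.mp (hgc x)).add
        (tendsto_iff_dist_tendsto_zero.mp (hfc (g' x)))
      simpa using this
    exact squeeze_zero (fun j => dist_nonneg) hb h0
  have hψφ : ∀ x, ψ (φ x) = x := by
    intro x
    have h1 : Tendsto (fun j => ψs (ι j) (φs (ι j) x)) atTop (𝓝 (ψ (φ x))) :=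
      hcomp (fun j => ψs (ι j)) (fun j => φs (ι j)) ψ φ (fun j => hψiso (ι j)) hψ hφ x
    have h2 : (fun j => ψs (ι j) (φs (ι j) x)) = fun _ => x :=
      funext fun j => hinv_l (ι j) x
    rw [h2] at h1
    exact tendsto_nhds_unique h1 tendsto_const_nhds
  have hφψ : ∀ x, φ (ψ x) = x := by
    intro x
    have h1 : Tendsto (fun j => φs (ι j) (ψs (ι j) x)) atTop (𝓝 (φ (ψ x))) :=
      hcomp (fun j => φs (ι j)) (fun j => ψs (ι j)) φ ψ (fun j => (hφs (ι j)).1) hφ hψ x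
    have h2 : (fun j => φs (ι j) (ψs (ι j) x)) = fun _ => x :=
      funext fun j => hinv_r (ι j) x
    rw [h2] at h1
    exact tendsto_nhds_unique h1 tendsto_const_nhds
  have hφbij : Function.Bijective φ :=
    Function.bijective_iff_has_inverse.mpr ⟨ψ, hψφ, hφψ⟩
  -- measure preservation
  have hle1 : ∀ U : Set X, IsOpen U → μ (φ ⁻¹' U) ≤ μ U :=
    map_le_on_open μ (fun j => φs (ι j)) φ (fun j => hφmeas (ι j))
      (fun j => (hφs (ι j)).2.2) hφ
  have hle2 : ∀ U : Set X, IsOpen U → μ (ψ ⁻¹' U) ≤ μ U :=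
    map_le_on_open μ (fun j => ψs (ι j)) ψ (fun j => hψmeas (ι j))
      (fun j => hψmap (ι j)) hψ
  have hopen_eq : ∀ U : Set X, IsOpen U → μ (φ ⁻¹' U) = μ U := by
    intro U hU
    refine le_antisymm (hle1 U hU) ?_
    have hUeq : ψ ⁻¹' (φ ⁻¹' U) = U := by
      ext x
      simp [Set.mem_preimage, hφψ x]
    have := hle2 (φ ⁻¹' U) (hU.preimage hφiso.continuous)
    rwa [hUeq] at this
  have hφmeas' : Measurable φ := hφiso.continuous.measurable
  haveI : IsProbabilityMeasure (Measure.map φ μ) :=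
    Measure.isProbabilityMeasure_map hφmeas'.aemeasurable
  have hφmap : Measure.map φ μ = μ := by
    refine meas_ext_open _ _ fun U hU => ?_
    rw [Measure.map_apply hφmeas' hU.measurableSet]
    exact hopen_eq U hU
  -- convergence in measure
  have htm : TendstoInMeasure μ (fun j => φs (ι j)) atTop φ := by
    refine tendstoInMeasure_of_tendsto_ae (fun j => ?_) (ae_of_all _ fun x => hφ x)
    exact ((hφs (ι j)).1.continuous).aestronglyMeasurable
  have hbullet : ∀ ε : ℝ, 0 < ε →
      Tendsto (fun j => μ {x : X | ε < dist (φs (ι j) x) (φ x)}) atTop (𝓝 0) := by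
    intro ε hε
    have h1 := tendstoInMeasure_iff_dist.mp htm ε hε
    have hle : ∀ j : ℕ, μ {x : X | ε < dist (φs (ι j) x) (φ x)} ≤
        μ {x : X | ε ≤ dist (φs (ι j) x) (φ x)} :=
      fun j => measure_mono fun x hx => by
        simp only [Set.mem_setOf_eq] at hx ⊢
        exact le_of_lt hx
    exact tendsto_of_tendsto_of_tendsto_of_le_of_le tendsto_const_nhds h1
      (fun j => zero_le) hle
  refine ⟨φ, ⟨hφiso, hφbij, hφmap⟩, hbullet, ?_⟩
  -- Ky Fan convergence
  rw [Metric.tendsto_atTop]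
  intro ε hε
  have h1 := hbullet (ε / 2) (by linarith)
  have h2 : ∀ᶠ j in atTop,
      μ {x : X | ε / 2 < dist (φs (ι j) x) (φ x)} < ENNReal.ofReal (ε / 2) :=
    h1.eventually_lt_const (by simp; linarith)
  obtain ⟨N, hN⟩ := eventually_atTop.mp h2
  refine ⟨N, fun n hn => ?_⟩
  have hmem : ε / 2 ∈ {ε' : ℝ | 0 ≤ ε' ∧
      μ {ω | ε' < dist (φs (ι n) ω) (φ ω)} ≤ ENNReal.ofReal ε'} :=
    ⟨by linarith, (hN n hn).le⟩
  have hub : kyFan μ (φs (ι n)) φ ≤ ε / 2 :=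
    csInf_le ⟨0, fun x hx => hx.1⟩ hmem
  have hlb : 0 ≤ kyFan μ (φs (ι n)) φ :=
    Real.sInf_nonneg fun x hx => hx.1
  rw [Real.dist_eq, abs_sub_comm, abs_of_nonpos (by linarith), neg_sub, sub_zero]
  linarith


end
end

section
/- Let X, Y, Z be mm-spaces with closed subgroups G ⊆ Aut(X), H ⊆ Aut(Y), K ⊆ Aut(Z). Then the equivariant box distance satisfies the triangle inequality: □((X,G),(Z,K)) ≤ □((X,G),(Y,H)) + □((Y,H),(Z,K)). -/
open MeasureTheory Metric Filter Set TopologicalSpace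
open scoped ENNReal Topology

noncomputable section

section AuxProof

open ProbabilityTheory

attribute [local instance] UniformSpace.secondCountable_of_separable

variable {W : Type*} [TopologicalSpace W] [MeasurableSpace W]


lemma biInf_add_biInf' {i1 : Sort*} {i2 : Sort*} {p : i1 -> Prop} {q : i2 -> Prop}
    (f : i1 -> ENNReal) (g : i2 -> ENNReal) :
    ((⨅ i, ⨅ _ : p i, f i) + ⨅ j, ⨅ _ : q j, g j)
      = ⨅ i, ⨅ _ : p i, ⨅ j, ⨅ _ : q j, (f i + g j) := by
  rw [ENNReal.iInf_add]
  refine iInf_congr fun i => ?_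
  rw [ENNReal.iInf_add]
  refine iInf_congr fun hi => ?_
  rw [ENNReal.add_iInf]
  exact iInf_congr fun j => ENNReal.add_iInf

lemma add_biInf' {i1 : Sort*} {p : i1 -> Prop} (a : ENNReal) (f : i1 -> ENNReal) :
    (a + ⨅ i, ⨅ _ : p i, f i) = ⨅ i, ⨅ _ : p i, (a + f i) := by
  rw [ENNReal.add_iInf]
  exact iInf_congr fun i => ENNReal.add_iInf

lemma biInf_add' {i1 : Sort*} {p : i1 -> Prop} (a : ENNReal) (f : i1 -> ENNReal) :
    ((⨅ i, ⨅ _ : p i, f i) + a) = ⨅ i, ⨅ _ : p i, (f i + a) := by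
  rw [ENNReal.iInf_add]
  exact iInf_congr fun i => ENNReal.iInf_add

lemma isOpen_compl_msupport (π : Measure W) : IsOpen (msupport π)ᶜ := by
  rw [isOpen_iff_forall_mem_open]
  intro z hz
  simp only [mem_compl_iff, msupport, mem_setOf_eq, not_forall] at hz
  obtain ⟨U, hU, hzU, hπU⟩ := hz
  exact ⟨U, fun w hw hmem => hπU (hmem U hU hw), hU, hzU⟩

lemma isClosed_msupport (π : Measure W) : IsClosed (msupport π) := by
  rw [← compl_compl (msupport π)]
  exact (isOpen_compl_msupport π).isClosed_compl

lemma msupport_compl_null [SecondCountableTopology W] [OpensMeasurableSpace W]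
    (π : Measure W) : π (msupport π)ᶜ = 0 := by
  apply measure_null_of_locally_null
  intro x hx
  simp only [mem_compl_iff, msupport, mem_setOf_eq, not_forall] at hx
  obtain ⟨U, hU, hxU, hπU⟩ := hx
  exact ⟨U, mem_nhdsWithin_of_mem_nhds (hU.mem_nhds hxU), le_antisymm (not_lt.1 hπU) zero_le⟩

variable {X Y Z : Type*}
  [MetricSpace X] [SeparableSpace X] [MeasurableSpace X] [BorelSpace X]
  [MetricSpace Y] [SeparableSpace Y] [MeasurableSpace Y] [BorelSpace Y]
  [MetricSpace Z] [CompleteSpace Z] [SeparableSpace Z] [MeasurableSpace Z] [BorelSpace Z]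
  [Nonempty Z]

set_option linter.unusedSectionVars false

/-- The gluing of two couplings along the common factor `Y`. -/
noncomputable def glue (π₁ : Measure (X × Y)) (π₂ : Measure (Y × Z)) [IsFiniteMeasure π₂] :
    Measure (X × Z) :=
  ((π₁ ⊗ₘ ((π₂.condKernel).comap (Prod.snd : X × Y → Y) measurable_snd)).map
    (fun p => (p.1.1, p.2)))

variable (π₁ : Measure (X × Y)) (π₂ : Measure (Y × Z))
  [IsProbabilityMeasure π₁] [IsProbabilityMeasure π₂]

lemma measurable_p13 : Measurable (fun p : (X × Y) × Z => (p.1.1, p.2)) :=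
  (measurable_fst.fst).prodMk measurable_snd

lemma measurable_q23 : Measurable (fun p : (X × Y) × Z => (p.1.2, p.2)) :=
  (measurable_fst.snd).prodMk measurable_snd

lemma glue_pullback_xy {A : Set (X × Y)} (hA : MeasurableSet A) :
    (π₁ ⊗ₘ ((π₂.condKernel).comap (Prod.snd : X × Y → Y) measurable_snd))
      (Prod.fst ⁻¹' A) = π₁ A := by
  rw [← Measure.fst_apply hA, Measure.fst_compProd]

lemma glue_pullback_yz (hm : π₁.map Prod.snd = π₂.map Prod.fst)
    {B : Set (Y × Z)} (hB : MeasurableSet B) :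
    (π₁ ⊗ₘ ((π₂.condKernel).comap (Prod.snd : X × Y → Y) measurable_snd))
      ((fun p : (X × Y) × Z => (p.1.2, p.2)) ⁻¹' B) = π₂ B := by
  rw [Measure.compProd_apply (measurable_q23 hB)]
  have h1 : ∀ p : X × Y,
      ((π₂.condKernel).comap (Prod.snd : X × Y → Y)
        (measurable_snd : Measurable (Prod.snd : X × Y → Y))) p
        (Prod.mk p ⁻¹' ((fun p : (X × Y) × Z => (p.1.2, p.2)) ⁻¹' B))
      = π₂.condKernel p.2 (Prod.mk p.2 ⁻¹' B) := fun p => by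
    have hset : (Prod.mk p ⁻¹' ((fun p : (X × Y) × Z => (p.1.2, p.2)) ⁻¹' B))
        = Prod.mk p.2 ⁻¹' B := rfl
    rw [Kernel.comap_apply, hset]
  simp only [h1]
  have h2 : Measurable fun y => π₂.condKernel y (Prod.mk y ⁻¹' B) :=
    Kernel.measurable_kernel_prodMk_left hB
  rw [show ∫⁻ p : X × Y, π₂.condKernel p.2 (Prod.mk p.2 ⁻¹' B) ∂π₁
      = ∫⁻ y, π₂.condKernel y (Prod.mk y ⁻¹' B) ∂(π₁.map Prod.snd)
    from (lintegral_map h2 measurable_snd).symm, hm]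
  have h3 : π₂.map Prod.fst = π₂.fst := rfl
  rw [h3, ← Measure.compProd_apply hB, π₂.disintegrate π₂.condKernel]

lemma glue_map_fst : (glue π₁ π₂).map Prod.fst = π₁.map Prod.fst := by
  ext s hs
  rw [glue, Measure.map_map measurable_fst measurable_p13,
    Measure.map_apply (measurable_fst.comp measurable_p13) hs]
  have h1 : (Prod.fst ∘ fun p : (X × Y) × Z => (p.1.1, p.2)) ⁻¹' s
      = (Prod.fst : (X × Y) × Z → X × Y) ⁻¹' (Prod.fst ⁻¹' s) := rfl
  rw [h1, glue_pullback_xy π₁ π₂ (measurable_fst hs), Measure.map_apply measurable_fst hs]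

lemma glue_map_snd (hm : π₁.map Prod.snd = π₂.map Prod.fst) :
    (glue π₁ π₂).map Prod.snd = π₂.map Prod.snd := by
  ext s hs
  rw [glue, Measure.map_map measurable_snd measurable_p13,
    Measure.map_apply (measurable_snd.comp measurable_p13) hs]
  have h1 : (Prod.snd ∘ fun p : (X × Y) × Z => (p.1.1, p.2)) ⁻¹' s
      = (fun p : (X × Y) × Z => (p.1.2, p.2)) ⁻¹' (Prod.snd ⁻¹' s) := rfl
  rw [h1, glue_pullback_yz π₁ π₂ hm (measurable_snd hs), Measure.map_apply measurable_snd hs]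

instance : IsProbabilityMeasure (glue π₁ π₂) :=
  MeasureTheory.Measure.isProbabilityMeasure_map measurable_p13.aemeasurable

/-- Key pointwise triangle inequality for `dPi` across a glued coupling. -/
lemma dPi_glue_le (hm : π₁.map Prod.snd = π₂.map Prod.fst)
    {g : X → X} (hg : Continuous g) (h : Y → Y) {k : Z → Z} (hk : Continuous k) :
    dPi (glue π₁ π₂) g k ≤ dPi π₁ g h + dPi π₂ h k := by
  conv_rhs => rw [dPi, dPi]
  rw [biInf_add_biInf']
  refine le_iInf fun S₁ => le_iInf fun hS₁ => le_iInf fun S₂ => le_iInf fun hS₂ => ?_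
  simp only [mem_setOf_eq] at hS₁ hS₂
  set κ' := (π₂.condKernel).comap (Prod.snd : X × Y → Y) measurable_snd with hκ'
  set τ : Measure ((X × Y) × Z) := π₁ ⊗ₘ κ' with hτ
  set T : Set ((X × Y) × Z) :=
    (Prod.fst ⁻¹' S₁) ∩ ((fun p : (X × Y) × Z => (p.1.2, p.2)) ⁻¹' S₂) with hT
  have hTmeas : MeasurableSet T :=
    (measurable_fst hS₁.1.measurableSet).inter (measurable_q23 hS₂.1.measurableSet)
  set I : Set (X × Z) := (fun p : (X × Y) × Z => (p.1.1, p.2)) '' T with hI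
  set S : Set (X × Z) := closure I ∩ msupport (glue π₁ π₂) with hS
  have hSclosed : IsClosed S := isClosed_closure.inter (isClosed_msupport _)
  have hle : dPi (glue π₁ π₂) g k ≤ max (1 - (glue π₁ π₂) S) (dS S g k) := by
    refine iInf₂_le S ⟨hSclosed, inter_subset_right⟩
  refine hle.trans (max_le ?_ ?_)
  · -- measure bound
    have hglueS : (glue π₁ π₂) S = (glue π₁ π₂) (closure I) :=
      measure_inter_conull (msupport_compl_null _)
    have hτT : τ T ≤ (glue π₁ π₂) S := by
      rw [hglueS, glue, Measure.map_apply measurable_p13 isClosed_closure.measurableSet]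
      exact measure_mono ((subset_preimage_image _ _).trans
        (preimage_mono subset_closure))
    have hcompl : τ Tᶜ ≤ (1 - π₁ S₁) + (1 - π₂ S₂) := by
      have hTc : Tᶜ = (Prod.fst ⁻¹' S₁ᶜ) ∪ ((fun p : (X × Y) × Z => (p.1.2, p.2)) ⁻¹' S₂ᶜ) := by
        rw [hT, compl_inter]; rfl
      rw [hTc]
      refine (measure_union_le _ _).trans ?_
      rw [show (Prod.fst ⁻¹' S₁ᶜ : Set ((X × Y) × Z)) = Prod.fst ⁻¹' (S₁ᶜ) from rfl]
      rw [hτ, glue_pullback_xy π₁ π₂ hS₁.1.measurableSet.compl,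
        glue_pullback_yz π₁ π₂ hm hS₂.1.measurableSet.compl,
        prob_compl_eq_one_sub hS₁.1.measurableSet, prob_compl_eq_one_sub hS₂.1.measurableSet]
    have h1 : (1 : ℝ≥0∞) - (glue π₁ π₂) S ≤ τ Tᶜ := by
      rw [prob_compl_eq_one_sub hTmeas]
      exact tsub_le_tsub_left hτT 1
    exact (h1.trans hcompl).trans (add_le_add (le_max_left _ _) (le_max_left _ _))
  · -- dS bound
    set c : ℝ≥0∞ := dS S₁ g h + dS S₂ h k with hc
    set F : (X × Z) × (X × Z) → ℝ≥0∞ :=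
      fun p => ENNReal.ofReal |dist (g p.1.1) p.2.1 - dist (k p.1.2) p.2.2| with hF
    have hFcont : Continuous F := by
      apply ENNReal.continuous_ofReal.comp
      apply Continuous.abs
      exact ((hg.comp (continuous_fst.comp continuous_fst)).dist
          (continuous_fst.comp continuous_snd)).sub
        ((hk.comp (continuous_snd.comp continuous_fst)).dist
          (continuous_snd.comp continuous_snd))
    have hIT : ∀ p ∈ I ×ˢ I, F p ≤ c := by
      rintro ⟨p1, p2⟩ ⟨⟨a₁, ha₁, rfl⟩, ⟨a₂, ha₂, rfl⟩⟩
      have key : |dist (g a₁.1.1) a₂.1.1 - dist (k a₁.2) a₂.2|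
          ≤ |dist (g a₁.1.1) a₂.1.1 - dist (h a₁.1.2) a₂.1.2|
            + |dist (h a₁.1.2) a₂.1.2 - dist (k a₁.2) a₂.2| := abs_sub_le _ _ _
      refine le_trans (ENNReal.ofReal_le_ofReal key) ?_
      rw [ENNReal.ofReal_add (abs_nonneg _) (abs_nonneg _)]
      refine add_le_add ?_ ?_
      · exact le_iSup₂_of_le (a₁.1, a₂.1) ⟨ha₁.1, ha₂.1⟩ le_rfl
      · exact le_iSup₂_of_le ((a₁.1.2, a₁.2), (a₂.1.2, a₂.2)) ⟨ha₁.2, ha₂.2⟩ le_rfl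
    have hclosure : ∀ p ∈ closure I ×ˢ closure I, F p ≤ c := by
      rw [← closure_prod_eq]
      have : I ×ˢ I ⊆ {p | F p ≤ c} := hIT
      exact fun p hp =>
        (IsClosed.closure_subset_iff (isClosed_le hFcont continuous_const)).2 this hp
    refine le_trans ?_ (add_le_add (le_max_right _ _) (le_max_right _ _))
    refine iSup₂_le fun p hp => ?_
    exact hclosure p ⟨inter_subset_left hp.1, inter_subset_left hp.2⟩

/-- Triangle inequality for `boxPi` across a glued coupling. -/
lemma boxPi_glue_le (hm : π₁.map Prod.snd = π₂.map Prod.fst)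
    (G : Set (X → X)) (hGc : ∀ g ∈ G, Continuous g)
    (H : Set (Y → Y)) (K : Set (Z → Z)) (hKc : ∀ k ∈ K, Continuous k) :
    boxPi (glue π₁ π₂) G K ≤ boxPi π₁ G H + boxPi π₂ H K := by
  rw [boxPi]
  refine max_le ?_ ?_
  · refine iSup₂_le fun g hg => ?_
    have step : ∀ h ∈ H, (⨅ k ∈ K, dPi (glue π₁ π₂) g k)
        ≤ dPi π₁ g h + ⨆ h' ∈ H, ⨅ k ∈ K, dPi π₂ h' k := by
      intro h hh
      have h1 : (⨅ k ∈ K, dPi (glue π₁ π₂) g k) ≤ ⨅ k ∈ K, (dPi π₁ g h + dPi π₂ h k) :=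
        iInf₂_mono fun k hk => dPi_glue_le π₁ π₂ hm (hGc g hg) h (hKc k hk)
      refine h1.trans ?_
      rw [← add_biInf']
      refine add_le_add_right ?_ _
      exact le_iSup₂_of_le h hh le_rfl
    have h2 : (⨅ k ∈ K, dPi (glue π₁ π₂) g k)
        ≤ (⨅ h ∈ H, dPi π₁ g h) + ⨆ h' ∈ H, ⨅ k ∈ K, dPi π₂ h' k := by
      rw [biInf_add']
      exact le_iInf fun h => le_iInf fun hh => step h hh
    refine h2.trans (add_le_add ?_ ?_)
    · exact le_trans (le_iSup₂_of_le g hg le_rfl) (le_max_left _ _)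
    · exact le_max_left _ _
  · refine iSup₂_le fun k hk => ?_
    have step : ∀ h ∈ H, (⨅ g ∈ G, dPi (glue π₁ π₂) g k)
        ≤ (⨆ h' ∈ H, ⨅ g ∈ G, dPi π₁ g h') + dPi π₂ h k := by
      intro h hh
      have h1 : (⨅ g ∈ G, dPi (glue π₁ π₂) g k) ≤ ⨅ g ∈ G, (dPi π₁ g h + dPi π₂ h k) :=
        iInf₂_mono fun g hg => dPi_glue_le π₁ π₂ hm (hGc g hg) h (hKc k hk)
      refine h1.trans ?_
      rw [← biInf_add']
      refine add_le_add_left ?_ _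
      exact le_iSup₂_of_le h hh le_rfl
    have h2 : (⨅ g ∈ G, dPi (glue π₁ π₂) g k)
        ≤ (⨆ h' ∈ H, ⨅ g ∈ G, dPi π₁ g h') + ⨅ h ∈ H, dPi π₂ h k := by
      rw [add_biInf']
      exact le_iInf fun h => le_iInf fun hh => step h hh
    refine h2.trans (add_le_add ?_ ?_)
    · exact le_max_right _ _
    · exact le_trans (le_iSup₂_of_le k hk le_rfl) (le_max_right _ _)

end AuxProof

/-- the equivariant box distance satisfies the triangle inequality. -/
theorem stmt_3 {X Y Z : Type*} [MetricSpace X] [CompleteSpace X] [SeparableSpace X] [MeasurableSpace X] [BorelSpace X]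
    (μX : Measure X) [IsProbabilityMeasure μX] [μX.IsOpenPosMeasure]
    [MetricSpace Y] [CompleteSpace Y] [SeparableSpace Y] [MeasurableSpace Y] [BorelSpace Y]
    (μY : Measure Y) [IsProbabilityMeasure μY] [μY.IsOpenPosMeasure]
    [MetricSpace Z] [CompleteSpace Z] [SeparableSpace Z] [MeasurableSpace Z] [BorelSpace Z]
    (μZ : Measure Z) [IsProbabilityMeasure μZ] [μZ.IsOpenPosMeasure]
    (G : Set (X → X)) (hG : IsClosedAutSubgroup μX G)
    (H : Set (Y → Y)) (hH : IsClosedAutSubgroup μY H)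
    (K : Set (Z → Z)) (hK : IsClosedAutSubgroup μZ K) :
    eqBox μX μZ G K ≤ eqBox μX μY G H + eqBox μY μZ H K := by
  haveI : Nonempty Z := Measure.nonempty_of_neZero μZ
  have hGc : ∀ g ∈ G, Continuous g := fun g hg => ((hG.1 g hg).1).continuous
  have hKc : ∀ k ∈ K, Continuous k := fun k hk => ((hK.1 k hk).1).continuous
  conv_rhs => rw [eqBox, eqBox]
  rw [biInf_add_biInf']
  refine le_iInf fun π₁ => le_iInf fun hπ₁ => le_iInf fun π₂ => le_iInf fun hπ₂ => ?_
  obtain ⟨hπ₁f, hπ₁s⟩ := hπ₁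
  obtain ⟨hπ₂f, hπ₂s⟩ := hπ₂
  haveI : IsProbabilityMeasure π₁ := ⟨by
    rw [← Set.preimage_univ (f := (Prod.fst : X × Y → X)),
      ← Measure.map_apply measurable_fst MeasurableSet.univ, hπ₁f]
    exact measure_univ⟩
  haveI : IsProbabilityMeasure π₂ := ⟨by
    rw [← Set.preimage_univ (f := (Prod.fst : Y × Z → Y)),
      ← Measure.map_apply measurable_fst MeasurableSet.univ, hπ₂f]
    exact measure_univ⟩
  have hm : π₁.map Prod.snd = π₂.map Prod.fst := hπ₁s.trans hπ₂f.symm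
  have hmem : glue π₁ π₂ ∈ couplings μX μZ :=
    ⟨(glue_map_fst π₁ π₂).trans hπ₁f, (glue_map_snd π₁ π₂ hm).trans hπ₂s⟩
  refine le_trans ?_ (boxPi_glue_le π₁ π₂ hm G hGc H K hKc)
  rw [eqBox]
  exact iInf₂_le _ hmem


end
end

section
/- Let X, Y be mm-spaces with closed subgroups G ⊆ Aut(X), H ⊆ Aut(Y). Then □(X,Y) ≤ 2·□((X,G),(Y,H)), where □(X,Y) := □((X,{id_X}),(Y,{id_Y})) is the box distance between the underlying mm-spaces. -/
open MeasureTheory Metric Filter Set TopologicalSpace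
open scoped ENNReal Topology

noncomputable section

private lemma two_mul_iInf' {ι : Sort*} (f : ι → ℝ≥0∞) : 2 * ⨅ i, f i = ⨅ i, 2 * f i :=
  ENNReal.mul_iInf_of_ne two_ne_zero ENNReal.ofNat_ne_top

private lemma dS_le_aux {X Y : Type*} [MetricSpace X] [MetricSpace Y]
    (S : Set (X × Y)) (h : Y → Y) :
    dS S (id : X → X) (id : Y → Y) ≤ 2 * dS S (id : X → X) h := by
  rw [dS]
  refine iSup₂_le fun p hp => ?_
  rw [Set.mem_prod] at hp
  have h1 : ENNReal.ofReal |dist (id p.1.1) p.2.1 - dist (h p.1.2) p.2.2|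
      ≤ dS S (id : X → X) h := le_iSup₂ (f := fun q (_ : q ∈ S ×ˢ S) =>
        ENNReal.ofReal |dist (id q.1.1) q.2.1 - dist (h q.1.2) q.2.2|) p
        (Set.mem_prod.2 hp)
  have h2 : ENNReal.ofReal |dist (id p.1.1) p.1.1 - dist (h p.1.2) p.1.2|
      ≤ dS S (id : X → X) h := le_iSup₂ (f := fun q (_ : q ∈ S ×ˢ S) =>
        ENNReal.ofReal |dist (id q.1.1) q.2.1 - dist (h q.1.2) q.2.2|)
        (p.1, p.1) (Set.mem_prod.2 ⟨hp.1, hp.1⟩)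
  have key : |dist (id p.1.1) p.2.1 - dist (id p.1.2) p.2.2|
      ≤ |dist (id p.1.1) p.2.1 - dist (h p.1.2) p.2.2|
        + |dist (id p.1.1) p.1.1 - dist (h p.1.2) p.1.2| := by
    simp only [id_eq, dist_self, zero_sub, abs_neg, abs_of_nonneg dist_nonneg]
    have htri : |dist (h p.1.2) p.2.2 - dist p.1.2 p.2.2| ≤ dist (h p.1.2) p.1.2 :=
      abs_dist_sub_le _ _ _
    calc |dist p.1.1 p.2.1 - dist p.1.2 p.2.2|
        ≤ |dist p.1.1 p.2.1 - dist (h p.1.2) p.2.2|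
          + |dist (h p.1.2) p.2.2 - dist p.1.2 p.2.2| := by
          have := abs_sub_abs_le_abs_sub (dist p.1.1 p.2.1 - dist p.1.2 p.2.2) 0
          calc |dist p.1.1 p.2.1 - dist p.1.2 p.2.2|
              = |(dist p.1.1 p.2.1 - dist (h p.1.2) p.2.2)
                + (dist (h p.1.2) p.2.2 - dist p.1.2 p.2.2)| := by ring_nf
            _ ≤ _ := abs_add_le _ _
      _ ≤ _ := by linarith
  calc ENNReal.ofReal |dist (id p.1.1) p.2.1 - dist (id p.1.2) p.2.2|
      ≤ ENNReal.ofReal (|dist (id p.1.1) p.2.1 - dist (h p.1.2) p.2.2|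
        + |dist (id p.1.1) p.1.1 - dist (h p.1.2) p.1.2|) := ENNReal.ofReal_le_ofReal key
    _ ≤ ENNReal.ofReal |dist (id p.1.1) p.2.1 - dist (h p.1.2) p.2.2|
        + ENNReal.ofReal |dist (id p.1.1) p.1.1 - dist (h p.1.2) p.1.2| :=
        ENNReal.ofReal_add_le
    _ ≤ dS S (id : X → X) h + dS S (id : X → X) h := add_le_add h1 h2
    _ = 2 * dS S (id : X → X) h := (two_mul _).symm

private lemma dPi_le_aux {X Y : Type*} [MetricSpace X] [MetricSpace Y]
    [MeasurableSpace X] [MeasurableSpace Y]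
    (π : Measure (X × Y)) (h : Y → Y) :
    dPi π (id : X → X) (id : Y → Y) ≤ 2 * dPi π (id : X → X) h := by
  rw [dPi, dPi, two_mul_iInf']
  refine le_iInf fun S => ?_
  rw [two_mul_iInf']
  refine le_iInf fun hS => le_trans (iInf₂_le S hS) (max_le ?_ ?_)
  · exact le_trans (le_mul_of_one_le_left' one_le_two)
      (mul_le_mul_right (le_max_left _ _) 2)
  · exact le_trans (dS_le_aux S h) (mul_le_mul_right (le_max_right _ _) 2)

/-- `□(X,Y) ≤ 2·□((X,G),(Y,H))`, where the plain box distance is the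
equivariant one with trivial groups. -/
theorem stmt_4 {X Y : Type*} [MetricSpace X] [CompleteSpace X] [SeparableSpace X] [MeasurableSpace X] [BorelSpace X]
    (μX : Measure X) [IsProbabilityMeasure μX] [μX.IsOpenPosMeasure]
    [MetricSpace Y] [CompleteSpace Y] [SeparableSpace Y] [MeasurableSpace Y] [BorelSpace Y]
    (μY : Measure Y) [IsProbabilityMeasure μY] [μY.IsOpenPosMeasure]
    (G : Set (X → X)) (hG : IsClosedAutSubgroup μX G)
    (H : Set (Y → Y)) (hH : IsClosedAutSubgroup μY H) :
    eqBox μX μY ({id} : Set (X → X)) ({id} : Set (Y → Y)) ≤ 2 * eqBox μX μY G H := by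
  have key : ∀ π : Measure (X × Y),
      boxPi π ({id} : Set (X → X)) ({id} : Set (Y → Y)) ≤ 2 * boxPi π G H := by
    intro π
    have hbox : boxPi π ({id} : Set (X → X)) ({id} : Set (Y → Y))
        = dPi π (id : X → X) (id : Y → Y) := by
      simp [boxPi]
    rw [hbox]
    have h1 : (⨅ h ∈ H, dPi π (id : X → X) h) ≤ boxPi π G H :=
      le_trans (le_iSup₂ (f := fun g (_ : g ∈ G) => ⨅ h ∈ H, dPi π g h) id hG.2.1)
        (le_max_left _ _)
    calc dPi π (id : X → X) (id : Y → Y)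
        ≤ ⨅ h ∈ H, 2 * dPi π (id : X → X) h :=
          le_iInf₂ fun h _ => dPi_le_aux π h
      _ = 2 * ⨅ h ∈ H, dPi π (id : X → X) h := by
          rw [two_mul_iInf']
          exact iInf_congr fun h => (two_mul_iInf' _).symm
      _ ≤ 2 * boxPi π G H := mul_le_mul_right h1 2
  rw [eqBox, eqBox, two_mul_iInf']
  refine iInf_mono fun π => ?_
  rw [two_mul_iInf']
  exact iInf_mono fun hπ => key π


end
end

section
/- Let X be a complete separable metric space, let f, f' : X → ℝ be 1-Lipschitz functions, and let μ, ν be Borel probability measures on X. Then |d_KF^μ(f, f') − d_KF^ν(f, f')| ≤ 2·d_P(μ, ν), where d_P is the Prokhorov distance. -/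
open MeasureTheory Metric Filter Set TopologicalSpace
open scoped ENNReal Topology

noncomputable section

lemma kyFan_le_of_prokhorov_mem {X : Type*} [MetricSpace X]
    [MeasurableSpace X] [BorelSpace X]
    (f f' : X → ℝ) (hf : LipschitzWith 1 f) (hf' : LipschitzWith 1 f')
    (μ ν : Measure X) [IsProbabilityMeasure μ] [IsProbabilityMeasure ν]
    {δ : ℝ} (hδpos : 0 < δ)
    (hδ : ∀ A : Set X, MeasurableSet A →
      μ A ≤ ν (Metric.thickening δ A) + ENNReal.ofReal δ) :
    kyFan μ f f' ≤ kyFan ν f f' + 2 * δ := by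
  have hmeas : ∀ c : ℝ, MeasurableSet {x : X | c < dist (f x) (f' x)} := by
    intro c
    exact measurableSet_lt measurable_const
      ((hf.continuous.dist hf'.continuous).measurable)
  have hbdd : ∀ κ : Measure X,
      BddBelow {ε : ℝ | 0 ≤ ε ∧ κ {ω | ε < dist (f ω) (f' ω)} ≤ ENNReal.ofReal ε} :=
    fun κ => ⟨0, fun ε hε => hε.1⟩
  have hnonempty : (1 : ℝ) ∈
      {ε : ℝ | 0 ≤ ε ∧ ν {ω | ε < dist (f ω) (f' ω)} ≤ ENNReal.ofReal ε} := by
    refine ⟨zero_le_one, ?_⟩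
    simpa using prob_le_one (μ := ν)
  -- key step
  have key : ∀ ε ∈ {ε : ℝ | 0 ≤ ε ∧ ν {ω | ε < dist (f ω) (f' ω)} ≤ ENNReal.ofReal ε},
      kyFan μ f f' ≤ ε + 2 * δ := by
    rintro ε ⟨hε0, hεν⟩
    have hsub : Metric.thickening δ {x : X | ε + 2 * δ < dist (f x) (f' x)}
        ⊆ {x : X | ε < dist (f x) (f' x)} := by
      intro x hx
      rw [Metric.mem_thickening_iff] at hx
      obtain ⟨a, ha, hxa⟩ := hx
      have h1 : dist (f a) (f x) ≤ dist a x := by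
        simpa using hf.dist_le_mul a x
      have h2 : dist (f' x) (f' a) ≤ dist x a := by
        simpa using hf'.dist_le_mul x a
      have htri : dist (f a) (f' a) ≤ dist (f a) (f x) + dist (f x) (f' x)
          + dist (f' x) (f' a) := dist_triangle4 _ _ _ _
      have : ε + 2 * δ < dist (f a) (f' a) := ha
      have hd : dist x a = dist a x := dist_comm x a
      simp only [Set.mem_setOf_eq]
      nlinarith [dist_nonneg (x := x) (y := a)]
    have hμ : μ {x : X | ε + 2 * δ < dist (f x) (f' x)} ≤ ENNReal.ofReal (ε + 2 * δ) := by
      calc μ {x : X | ε + 2 * δ < dist (f x) (f' x)}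
          ≤ ν (Metric.thickening δ {x : X | ε + 2 * δ < dist (f x) (f' x)})
            + ENNReal.ofReal δ := hδ _ (hmeas _)
        _ ≤ ν {x : X | ε < dist (f x) (f' x)} + ENNReal.ofReal δ := by
            exact add_le_add (measure_mono hsub) le_rfl
        _ ≤ ENNReal.ofReal ε + ENNReal.ofReal δ := add_le_add hεν le_rfl
        _ = ENNReal.ofReal (ε + δ) := (ENNReal.ofReal_add hε0 hδpos.le).symm
        _ ≤ ENNReal.ofReal (ε + 2 * δ) := ENNReal.ofReal_le_ofReal (by linarith)
    exact csInf_le (hbdd μ) ⟨by linarith, hμ⟩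
  -- conclude via approximation of the infimum
  have : ∀ η > 0, kyFan μ f f' ≤ kyFan ν f f' + 2 * δ + η := by
    intro η hη
    have hlt : kyFan ν f f' < kyFan ν f f' + η := by linarith
    obtain ⟨ε, hεmem, hεlt⟩ :=
      (csInf_lt_iff (hbdd ν) ⟨1, hnonempty⟩).mp hlt
    have := key ε hεmem
    linarith
  linarith [le_of_forall_pos_le_add this]

lemma prokhorov_symm {X : Type*} [PseudoMetricSpace X] [MeasurableSpace X]
    (μ ν : Measure X) : prokhorov μ ν = prokhorov ν μ := by
  unfold prokhorov
  congr 1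
  ext ε
  exact ⟨fun ⟨h0, h⟩ => ⟨h0, fun A hA => ⟨(h A hA).2, (h A hA).1⟩⟩,
    fun ⟨h0, h⟩ => ⟨h0, fun A hA => ⟨(h A hA).2, (h A hA).1⟩⟩⟩

lemma kyFan_sub_le {X : Type*} [MetricSpace X]
    [MeasurableSpace X] [BorelSpace X]
    (f f' : X → ℝ) (hf : LipschitzWith 1 f) (hf' : LipschitzWith 1 f')
    (μ ν : Measure X) [IsProbabilityMeasure μ] [IsProbabilityMeasure ν] :
    kyFan μ f f' - kyFan ν f f' ≤ 2 * prokhorov μ ν := by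
  set P := {ε : ℝ | 0 < ε ∧ ∀ A : Set X, MeasurableSet A →
    μ A ≤ ν (Metric.thickening ε A) + ENNReal.ofReal ε ∧
    ν A ≤ μ (Metric.thickening ε A) + ENNReal.ofReal ε} with hP
  have hone : (1 : ℝ) ∈ P := by
    refine ⟨one_pos, fun A hA => ⟨?_, ?_⟩⟩ <;>
    · calc _ ≤ (1 : ℝ≥0∞) := prob_le_one
        _ = ENNReal.ofReal 1 := by simp
        _ ≤ _ := le_add_self
  have hlb : ∀ δ ∈ P, (kyFan μ f f' - kyFan ν f f') / 2 ≤ δ := by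
    rintro δ ⟨hδ0, hδ⟩
    have := kyFan_le_of_prokhorov_mem f f' hf hf' μ ν hδ0 (fun A hA => (hδ A hA).1)
    linarith
  have := le_csInf ⟨1, hone⟩ hlb
  unfold prokhorov
  linarith

/-- for 1-Lipschitz functions, the Ky Fan distances with respect to two
measures differ by at most twice the Prokhorov distance of the measures. -/
theorem stmt_6 {X : Type*} [MetricSpace X] [CompleteSpace X] [SeparableSpace X]
    [MeasurableSpace X] [BorelSpace X]
    (f f' : X → ℝ) (hf : LipschitzWith 1 f) (hf' : LipschitzWith 1 f')
    (μ ν : Measure X) [IsProbabilityMeasure μ] [IsProbabilityMeasure ν] :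
    |kyFan μ f f' - kyFan ν f f'| ≤ 2 * prokhorov μ ν := by
  rw [abs_sub_le_iff]
  refine ⟨kyFan_sub_le f f' hf hf' μ ν, ?_⟩
  rw [prokhorov_symm]
  exact kyFan_sub_le f f' hf hf' ν μ

end
end

section
/- Let X, Y be mm-spaces with closed subgroups G ⊆ Aut(X), H ⊆ Aut(Y). Then d_conc((X,G),(Y,H)) ≤ 4·□((X,G),(Y,H)). -/
open MeasureTheory Metric Filter Set TopologicalSpace
open scoped ENNReal Topology

noncomputable section

namespace EqProofAux

lemma kyFan_nonneg {Ω : Type*} [MeasurableSpace Ω] (μ : Measure Ω)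
    {Z : Type*} [PseudoMetricSpace Z] (u u' : Ω → Z) : 0 ≤ kyFan μ u u' :=
  Real.sInf_nonneg fun _ hx => hx.1

lemma kyFan_le {Ω : Type*} [MeasurableSpace Ω] {μ : Measure Ω}
    {Z : Type*} [PseudoMetricSpace Z] {u u' : Ω → Z} {c : ℝ} (hc : 0 ≤ c)
    (h : μ {ω | c < dist (u ω) (u' ω)} ≤ ENNReal.ofReal c) : kyFan μ u u' ≤ c :=
  csInf_le ⟨0, fun _ hx => hx.1⟩ ⟨hc, h⟩

lemma kyFan_le_one {Ω : Type*} [MeasurableSpace Ω] {μ : Measure Ω} [IsProbabilityMeasure μ]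
    {Z : Type*} [PseudoMetricSpace Z] (u u' : Ω → Z) : kyFan μ u u' ≤ 1 :=
  kyFan_le zero_le_one (by simpa using prob_le_one)

lemma lip_le {Z : Type*} [PseudoMetricSpace Z] {f : Z → ℝ} (hf : LipschitzWith 1 f)
    (a b : Z) : f a ≤ f b + dist b a := by
  have h := hf.dist_le_mul a b
  rw [NNReal.coe_one, one_mul, Real.dist_eq] at h
  have := (le_abs_self (f a - f b)).trans h
  rw [dist_comm]
  linarith

/-- Transport of a Lipschitz function along a set `T ⊆ A × B`. -/
lemma transport_exists {A B : Type*} [PseudoMetricSpace A] [PseudoMetricSpace B]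
    {T : Set (A × B)} (hT : T.Nonempty) {f : A → ℝ} (hf : LipschitzWith 1 f)
    {c : ℝ}
    (hB : ∀ p ∈ T, ∀ q ∈ T, dist p.1 q.1 ≤ dist p.2 q.2 + c) :
    ∃ f' : B → ℝ, LipschitzWith 1 f' ∧
      (∀ q ∈ T, ∀ b : B, f' b ≤ c + (f q.1 + dist q.2 b)) ∧
      (∀ (a : A) (b : B), (∀ p ∈ T, dist a p.1 ≤ dist b p.2 + c) → f a ≤ f' b) := by
  obtain ⟨p₀, hp₀⟩ := hT
  set I : B → Set ℝ := fun b => (fun p : A × B => f p.1 + dist p.2 b) '' T with hI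
  have hne : ∀ b, (I b).Nonempty := fun b => ⟨_, ⟨p₀, hp₀, rfl⟩⟩
  have hbdd : ∀ b, BddBelow (I b) := by
    intro b
    refine ⟨f p₀.1 - c - dist p₀.2 b, ?_⟩
    rintro v ⟨p, hp, rfl⟩
    have h1 : dist p.1 p₀.1 ≤ dist p.2 p₀.2 + c := hB p hp p₀ hp₀
    have h2 : f p₀.1 ≤ f p.1 + dist p.1 p₀.1 := lip_le hf _ _
    have h3 : dist p.2 p₀.2 ≤ dist p.2 b + dist b p₀.2 := dist_triangle _ _ _
    have h4 : dist b p₀.2 = dist p₀.2 b := dist_comm _ _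
    dsimp only
    linarith
  set F : B → ℝ := fun b => c + sInf (I b) with hF
  refine ⟨F, ?_, ?_, ?_⟩
  · refine LipschitzWith.of_le_add fun b b' => ?_
    have key : ∀ v ∈ I b', sInf (I b) - dist b b' ≤ v := by
      rintro v ⟨p, hp, rfl⟩
      have h1 : sInf (I b) ≤ f p.1 + dist p.2 b := csInf_le (hbdd b) ⟨p, hp, rfl⟩
      have h2 : dist p.2 b ≤ dist p.2 b' + dist b' b := dist_triangle _ _ _
      have h3 : dist b' b = dist b b' := dist_comm _ _
      show sInf (I b) - dist b b' ≤ f p.1 + dist p.2 b'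
      linarith
    have h5 : sInf (I b) - dist b b' ≤ sInf (I b') := le_csInf (hne b') key
    show c + sInf (I b) ≤ c + sInf (I b') + dist b b'
    linarith
  · intro q hq b
    have : sInf (I b) ≤ f q.1 + dist q.2 b := csInf_le (hbdd b) ⟨q, hq, rfl⟩
    show c + sInf (I b) ≤ _
    linarith
  · intro a b hcomp
    have key : ∀ v ∈ I b, f a - c ≤ v := by
      rintro v ⟨p, hp, rfl⟩
      have h1 : f a ≤ f p.1 + dist p.1 a := lip_le hf _ _
      have h2 : dist a p.1 ≤ dist b p.2 + c := hcomp p hp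
      have h3 : dist p.1 a = dist a p.1 := dist_comm _ _
      have h4 : dist b p.2 = dist p.2 b := dist_comm _ _
      show f a - c ≤ f p.1 + dist p.2 b
      linarith
    have h5 := le_csInf (hne b) key
    show f a ≤ c + sInf (I b)
    linarith

lemma sInf_image_le_of_nonneg {α : Type*} {s : Set α} {F : α → ℝ} (hF : ∀ a, 0 ≤ F a)
    {a : α} (ha : a ∈ s) : sInf (F '' s) ≤ F a :=
  csInf_le ⟨0, by rintro _ ⟨b, _, rfl⟩; exact hF b⟩ ⟨a, ha, rfl⟩

lemma rhoPair_nonneg {X Y : Type*} [MetricSpace X] [MetricSpace Y]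
    [MeasurableSpace X] [MeasurableSpace Y] (π : Measure (X × Y))
    (g : X → X) (h : Y → Y) (f : X → ℝ) (f' : Y → ℝ) : 0 ≤ rhoPair π g h f f' :=
  le_max_of_le_left (kyFan_nonneg _ _ _)

lemma rhoPair_le_one {X Y : Type*} [MetricSpace X] [MetricSpace Y]
    [MeasurableSpace X] [MeasurableSpace Y] {π : Measure (X × Y)} [IsProbabilityMeasure π]
    (g : X → X) (h : Y → Y) (f : X → ℝ) (f' : Y → ℝ) : rhoPair π g h f f' ≤ 1 :=
  max_le (kyFan_le_one _ _) (kyFan_le_one _ _)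

lemma rhoPi_nonneg {X Y : Type*} [MetricSpace X] [MetricSpace Y]
    [MeasurableSpace X] [MeasurableSpace Y] (π : Measure (X × Y))
    (g : X → X) (h : Y → Y) : 0 ≤ rhoPi π g h := by
  refine le_max_of_le_left (Real.sSup_nonneg ?_)
  rintro _ ⟨f, hf, rfl⟩
  exact Real.sInf_nonneg (by rintro _ ⟨f', _, rfl⟩; exact rhoPair_nonneg _ _ _ _ _)

lemma zero_mem_Lip1 (Z : Type*) [PseudoMetricSpace Z] : (fun _ : Z => (0:ℝ)) ∈ Lip1 Z :=
  (LipschitzWith.const 0).weaken zero_le_one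

lemma biInf_rhoPair_le {X Y : Type*} [MetricSpace X] [MetricSpace Y]
    [MeasurableSpace X] [MeasurableSpace Y] (π : Measure (X × Y))
    (g : X → X) (h : Y → Y) (f : X → ℝ) {f' : Y → ℝ} (hf' : f' ∈ Lip1 Y) :
    (⨅ f0 ∈ Lip1 Y, rhoPair π g h f f0) ≤ rhoPair π g h f f' := by
  have hbdd : BddBelow (Set.range fun f0 => ⨅ _ : f0 ∈ Lip1 Y, rhoPair π g h f f0) := by
    refine ⟨0, ?_⟩
    rintro v ⟨f0, rfl⟩
    exact Real.iInf_nonneg fun _ => rhoPair_nonneg _ _ _ _ _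
  exact (ciInf_le hbdd f').trans (le_of_eq (ciInf_pos hf'))

lemma biInf_rhoPair_le' {X Y : Type*} [MetricSpace X] [MetricSpace Y]
    [MeasurableSpace X] [MeasurableSpace Y] (π : Measure (X × Y))
    (g : X → X) (h : Y → Y) {f : X → ℝ} (hf : f ∈ Lip1 X) (f' : Y → ℝ) :
    (⨅ f0 ∈ Lip1 X, rhoPair π g h f0 f') ≤ rhoPair π g h f f' := by
  have hbdd : BddBelow (Set.range fun f0 => ⨅ _ : f0 ∈ Lip1 X, rhoPair π g h f0 f') := by
    refine ⟨0, ?_⟩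
    rintro v ⟨f0, rfl⟩
    exact Real.iInf_nonneg fun _ => rhoPair_nonneg _ _ _ _ _
  exact (ciInf_le hbdd f).trans (le_of_eq (ciInf_pos hf))

lemma rhoPi_le_one {X Y : Type*} [MetricSpace X] [MetricSpace Y]
    [MeasurableSpace X] [MeasurableSpace Y] {π : Measure (X × Y)} [IsProbabilityMeasure π]
    (g : X → X) (h : Y → Y) : rhoPi π g h ≤ 1 := by
  refine max_le ?_ ?_
  · refine Real.sSup_le ?_ zero_le_one
    rintro _ ⟨f, hf, rfl⟩
    exact (sInf_image_le_of_nonneg (F := fun f' => rhoPair π g h f f')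
      (fun _ => rhoPair_nonneg _ _ _ _ _) (zero_mem_Lip1 Y)).trans (rhoPair_le_one _ _ _ _)
  · refine Real.sSup_le ?_ zero_le_one
    rintro _ ⟨f', hf', rfl⟩
    exact (sInf_image_le_of_nonneg (F := fun f => rhoPair π g h f f')
      (fun _ => rhoPair_nonneg _ _ _ _ _) (zero_mem_Lip1 X)).trans (rhoPair_le_one _ _ _ _)

end EqProofAux

namespace EqProofAux

variable {X Y : Type*}
  [MetricSpace X] [MeasurableSpace X] [BorelSpace X] [SecondCountableTopology X]
  [MetricSpace Y] [MeasurableSpace Y] [BorelSpace Y] [SecondCountableTopology Y]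
  {μX : Measure X} {μY : Measure Y}

lemma rhoPi_le_main [IsProbabilityMeasure μX] [IsProbabilityMeasure μY]
    {π : Measure (X × Y)} [IsProbabilityMeasure π]
    (hπ1 : π.map Prod.fst = μX) (hπ2 : π.map Prod.snd = μY)
    {g : X → X} {h : Y → Y} (hg : IsAut μX g) (hh : IsAut μY h)
    {ε : ℝ} (hε0 : 0 < ε) (hε2 : ε < 1/2)
    {T : Set (X × Y)} (hTc : IsClosed T)
    (hTm : π Tᶜ ≤ ENNReal.ofReal (2*ε))
    (hA : ∀ p ∈ T, ∀ q ∈ T, |dist (g p.1) q.1 - dist (h p.2) q.2| ≤ ε)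
    (hB : ∀ p ∈ T, ∀ q ∈ T, |dist p.1 q.1 - dist p.2 q.2| ≤ 2*ε) :
    rhoPi π g h ≤ 4*ε := by
  have hTne : T.Nonempty := by
    rcases T.eq_empty_or_nonempty with hE | hNE
    · exfalso
      have h1 : π Tᶜ = 1 := by rw [hE, Set.compl_empty, measure_univ]
      have h2 : ENNReal.ofReal (2*ε) < 1 := ENNReal.ofReal_lt_one.mpr (by linarith)
      rw [h1] at hTm
      exact absurd hTm h2.not_ge
    · exact hNE
  have hπTc : π Tᶜ = 1 - π T := by
    rw [measure_compl hTc.measurableSet (measure_ne_top _ _), measure_univ]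
  -- good target regions
  set W₁ : Set Y := Metric.thickening (ε/2) (Prod.snd '' T) with hW₁
  set W₂ : Set X := Metric.thickening (ε/2) (Prod.fst '' T) with hW₂
  have hW₁m : MeasurableSet W₁ := Metric.isOpen_thickening.measurableSet
  have hW₂m : MeasurableSet W₂ := Metric.isOpen_thickening.measurableSet
  have hW₁T : π T ≤ μY W₁ := by
    calc π T ≤ π (Prod.snd ⁻¹' (Prod.snd '' T)) :=
          measure_mono (Set.subset_preimage_image _ _)
      _ ≤ π.map Prod.snd (Prod.snd '' T) :=
          Measure.le_map_apply measurable_snd.aemeasurable _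
      _ = μY (Prod.snd '' T) := by rw [hπ2]
      _ ≤ μY W₁ := measure_mono (Metric.self_subset_thickening (by linarith) _)
  have hW₂T : π T ≤ μX W₂ := by
    calc π T ≤ π (Prod.fst ⁻¹' (Prod.fst '' T)) :=
          measure_mono (Set.subset_preimage_image _ _)
      _ ≤ π.map Prod.fst (Prod.fst '' T) :=
          Measure.le_map_apply measurable_fst.aemeasurable _
      _ = μX (Prod.fst '' T) := by rw [hπ1]
      _ ≤ μX W₂ := measure_mono (Metric.self_subset_thickening (by linarith) _)
  have hW₁c : μY W₁ᶜ ≤ ENNReal.ofReal (2*ε) := by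
    rw [measure_compl hW₁m (measure_ne_top _ _), measure_univ]
    calc 1 - μY W₁ ≤ 1 - π T := tsub_le_tsub_left hW₁T 1
      _ = π Tᶜ := hπTc.symm
      _ ≤ _ := hTm
  have hW₂c : μX W₂ᶜ ≤ ENNReal.ofReal (2*ε) := by
    rw [measure_compl hW₂m (measure_ne_top _ _), measure_univ]
    calc 1 - μX W₂ ≤ 1 - π T := tsub_le_tsub_left hW₂T 1
      _ = π Tᶜ := hπTc.symm
      _ ≤ _ := hTm
  have hhm : Measurable h := hh.1.continuous.measurable
  have hgm : Measurable g := hg.1.continuous.measurable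
  have hBad₁ : π (Tᶜ ∪ (Prod.snd ⁻¹' (h ⁻¹' W₁))ᶜ) ≤ ENNReal.ofReal (4*ε) := by
    have hp : π (Prod.snd ⁻¹' (h ⁻¹' W₁))ᶜ ≤ ENNReal.ofReal (2*ε) := by
      have e1 : (Prod.snd ⁻¹' (h ⁻¹' W₁) : Set (X × Y))ᶜ = Prod.snd ⁻¹' ((h ⁻¹' W₁)ᶜ) := by
        rw [Set.preimage_compl]
      rw [e1, ← Measure.map_apply measurable_snd (hhm hW₁m).compl, hπ2]
      have e2 : ((h ⁻¹' W₁)ᶜ : Set Y) = h ⁻¹' (W₁ᶜ) := by rw [Set.preimage_compl]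
      rw [e2, ← Measure.map_apply hhm hW₁m.compl, hh.2.2]
      exact hW₁c
    calc π (Tᶜ ∪ (Prod.snd ⁻¹' (h ⁻¹' W₁))ᶜ) ≤ π Tᶜ + π (Prod.snd ⁻¹' (h ⁻¹' W₁))ᶜ :=
          measure_union_le _ _
      _ ≤ ENNReal.ofReal (2*ε) + ENNReal.ofReal (2*ε) := add_le_add hTm hp
      _ = ENNReal.ofReal (4*ε) := by
          rw [← ENNReal.ofReal_add (by linarith) (by linarith)]; ring_nf
  have hBad₂ : π (Tᶜ ∪ (Prod.fst ⁻¹' (g ⁻¹' W₂))ᶜ) ≤ ENNReal.ofReal (4*ε) := by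
    have hp : π (Prod.fst ⁻¹' (g ⁻¹' W₂))ᶜ ≤ ENNReal.ofReal (2*ε) := by
      have e1 : (Prod.fst ⁻¹' (g ⁻¹' W₂) : Set (X × Y))ᶜ = Prod.fst ⁻¹' ((g ⁻¹' W₂)ᶜ) := by
        rw [Set.preimage_compl]
      rw [e1, ← Measure.map_apply measurable_fst (hgm hW₂m).compl, hπ1]
      have e2 : ((g ⁻¹' W₂)ᶜ : Set X) = g ⁻¹' (W₂ᶜ) := by rw [Set.preimage_compl]
      rw [e2, ← Measure.map_apply hgm hW₂m.compl, hg.2.2]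
      exact hW₂c
    calc π (Tᶜ ∪ (Prod.fst ⁻¹' (g ⁻¹' W₂))ᶜ) ≤ π Tᶜ + π (Prod.fst ⁻¹' (g ⁻¹' W₂))ᶜ :=
          measure_union_le _ _
      _ ≤ ENNReal.ofReal (2*ε) + ENNReal.ofReal (2*ε) := add_le_add hTm hp
      _ = ENNReal.ofReal (4*ε) := by
          rw [← ENNReal.ofReal_add (by linarith) (by linarith)]; ring_nf
  have h4ε : (0:ℝ) ≤ 4*ε := by linarith
  -- Part 1
  have part1 : ∀ f ∈ Lip1 X, sInf ((fun f' => rhoPair π g h f f') '' Lip1 Y) ≤ 4*ε := by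
    intro f hf
    obtain ⟨f', hf'L, hup, hlow⟩ :=
      transport_exists (hT := hTne) (hf := hf) (c := 2*ε)
        (fun p hp q hq => by have := hB p hp q hq; rw [abs_sub_le_iff] at this; linarith [this.1])
    have claim1 : ∀ p ∈ T, dist (f p.1) (f' p.2) ≤ 4*ε := by
      intro p hp
      have hu : f' p.2 ≤ 2*ε + (f p.1 + dist p.2 p.2) := hup p hp p.2
      rw [dist_self] at hu
      have hl : f p.1 ≤ f' p.2 := by
        refine hlow p.1 p.2 fun q hq => ?_
        have := hB p hp q hq; rw [abs_sub_le_iff] at this; linarith [this.1]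
      rw [Real.dist_eq, abs_sub_le_iff]
      constructor <;> linarith
    have claim2 : ∀ p ∈ T, h p.2 ∈ W₁ → dist (f (g p.1)) (f' (h p.2)) ≤ 4*ε := by
      intro p hp hmem
      have hl : f (g p.1) ≤ f' (h p.2) := by
        refine hlow (g p.1) (h p.2) fun q hq => ?_
        have := hA p hp q hq; rw [abs_sub_le_iff] at this; linarith [this.1]
      obtain ⟨z, ⟨q, hq, hqz⟩, hz⟩ := Metric.mem_thickening_iff.mp hmem
      subst hqz
      have h1 : f' (h p.2) ≤ 2*ε + (f q.1 + dist q.2 (h p.2)) := hup q hq _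
      have h2 : f q.1 ≤ f (g p.1) + dist (g p.1) q.1 := lip_le hf _ _
      have h3 := hA p hp q hq
      rw [abs_sub_le_iff] at h3
      have h4 : dist q.2 (h p.2) = dist (h p.2) q.2 := dist_comm _ _
      rw [Real.dist_eq, abs_sub_le_iff]
      constructor <;> [skip; linarith]
      have := h3.1
      linarith [hz, h4 ▸ hz]
    have k1 : kyFan π (fun p : X × Y => f p.1) (fun p => f' p.2) ≤ 4*ε := by
      refine kyFan_le h4ε ?_
      refine (measure_mono ?_).trans (hTm.trans (ENNReal.ofReal_le_ofReal (by linarith)))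
      intro p hp hpT
      exact (claim1 p hpT).not_gt hp
    have k2 : kyFan π (fun p : X × Y => f (g p.1)) (fun p => f' (h p.2)) ≤ 4*ε := by
      refine kyFan_le h4ε ?_
      refine (measure_mono ?_).trans hBad₁
      intro p hp
      by_contra hcon
      simp only [Set.mem_union, Set.mem_compl_iff, not_or, not_not, Set.mem_preimage] at hcon
      exact (claim2 p hcon.1 hcon.2).not_gt hp
    exact le_trans (sInf_image_le_of_nonneg (F := fun f0 => rhoPair π g h f f0)
      (fun _ => rhoPair_nonneg _ _ _ _ _) hf'L) (max_le k1 k2)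
  -- Part 2
  have part2 : ∀ f' ∈ Lip1 Y, sInf ((fun f => rhoPair π g h f f') '' Lip1 X) ≤ 4*ε := by
    intro f' hf'
    set Tsw : Set (Y × X) := (fun p : X × Y => (p.2, p.1)) '' T with hTsw
    have hTswne : Tsw.Nonempty := hTne.image _
    obtain ⟨f, hfL, hup, hlow⟩ :=
      transport_exists (hT := hTswne) (hf := hf') (c := 2*ε)
        (by
          rintro p ⟨p', hp', rfl⟩ q ⟨q', hq', rfl⟩
          have h5 := (abs_sub_le_iff.mp (hB p' hp' q' hq')).2
          dsimp only
          linarith)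
    have claim1 : ∀ p ∈ T, dist (f p.1) (f' p.2) ≤ 4*ε := by
      intro p hp
      have hu : f p.1 ≤ 2*ε + (f' p.2 + dist p.1 p.1) :=
        hup (p.2, p.1) ⟨p, hp, rfl⟩ p.1
      rw [dist_self] at hu
      have hl : f' p.2 ≤ f p.1 := by
        refine hlow p.2 p.1 ?_
        rintro q ⟨q', hq', rfl⟩
        have h5 := (abs_sub_le_iff.mp (hB p hp q' hq')).2
        dsimp only
        linarith
      rw [Real.dist_eq, abs_sub_le_iff]
      constructor <;> linarith
    have claim2 : ∀ p ∈ T, g p.1 ∈ W₂ → dist (f (g p.1)) (f' (h p.2)) ≤ 4*ε := by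
      intro p hp hmem
      have hl : f' (h p.2) ≤ f (g p.1) := by
        refine hlow (h p.2) (g p.1) ?_
        rintro q ⟨q', hq', rfl⟩
        have h5 := (abs_sub_le_iff.mp (hA p hp q' hq')).2
        dsimp only
        linarith
      obtain ⟨z, ⟨q, hq, hqz⟩, hz⟩ := Metric.mem_thickening_iff.mp hmem
      subst hqz
      have h1 : f (g p.1) ≤ 2*ε + (f' q.2 + dist q.1 (g p.1)) :=
        hup (q.2, q.1) ⟨q, hq, rfl⟩ (g p.1)
      have h2 : f' q.2 ≤ f' (h p.2) + dist (h p.2) q.2 := lip_le hf' _ _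
      have h3 := hA p hp q hq
      rw [abs_sub_le_iff] at h3
      have h4 : dist q.1 (g p.1) = dist (g p.1) q.1 := dist_comm _ _
      rw [Real.dist_eq, abs_sub_le_iff]
      constructor <;> [skip; linarith]
      have := h3.1
      linarith [hz, h4 ▸ hz]
    have k1 : kyFan π (fun p : X × Y => f p.1) (fun p => f' p.2) ≤ 4*ε := by
      refine kyFan_le h4ε ?_
      refine (measure_mono ?_).trans (hTm.trans (ENNReal.ofReal_le_ofReal (by linarith)))
      intro p hp hpT
      exact (claim1 p hpT).not_gt hp
    have k2 : kyFan π (fun p : X × Y => f (g p.1)) (fun p => f' (h p.2)) ≤ 4*ε := by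
      refine kyFan_le h4ε ?_
      refine (measure_mono ?_).trans hBad₂
      intro p hp
      by_contra hcon
      simp only [Set.mem_union, Set.mem_compl_iff, not_or, not_not, Set.mem_preimage] at hcon
      exact (claim2 p hcon.1 hcon.2).not_gt hp
    exact le_trans (sInf_image_le_of_nonneg (F := fun f0 => rhoPair π g h f0 f')
      (fun _ => rhoPair_nonneg _ _ _ _ _) hfL) (max_le k1 k2)
  refine max_le ?_ ?_
  · exact Real.sSup_le (by rintro _ ⟨f, hf, rfl⟩; exact part1 f hf) h4ε
  · exact Real.sSup_le (by rintro _ ⟨f', hf', rfl⟩; exact part2 f' hf') h4ε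

end EqProofAux

namespace EqProofAux

variable {X Y : Type*}
  [MetricSpace X] [MeasurableSpace X] [BorelSpace X] [SecondCountableTopology X]
  [MetricSpace Y] [MeasurableSpace Y] [BorelSpace Y] [SecondCountableTopology Y]
  {μX : Measure X} {μY : Measure Y}

lemma exists_set_of_dPi_lt {π : Measure (X × Y)} [IsProbabilityMeasure π]
    {g : X → X} {h : Y → Y} {r : ℝ} (hr0 : 0 < r)
    (hlt : dPi π g h < ENNReal.ofReal r) :
    ∃ S : Set (X × Y), IsClosed S ∧ π Sᶜ ≤ ENNReal.ofReal r ∧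
      ∀ p ∈ S, ∀ q ∈ S, |dist (g p.1) q.1 - dist (h p.2) q.2| ≤ r := by
  rw [dPi, iInf_lt_iff] at hlt
  obtain ⟨S, hS⟩ := hlt
  rw [iInf_lt_iff] at hS
  obtain ⟨hSmem, hSlt⟩ := hS
  rw [max_lt_iff] at hSlt
  refine ⟨S, hSmem.1, ?_, ?_⟩
  · rw [measure_compl hSmem.1.measurableSet (measure_ne_top _ _), measure_univ]
    exact hSlt.1.le
  · intro p hp q hq
    have hle : ENNReal.ofReal |dist (g p.1) q.1 - dist (h p.2) q.2| ≤ dS S g h :=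
      le_iSup₂ (f := fun (p : (X × Y) × (X × Y)) (_ : p ∈ S ×ˢ S) =>
        ENNReal.ofReal |dist (g p.1.1) p.2.1 - dist (h p.1.2) p.2.2|)
        (p, q) (Set.mk_mem_prod hp hq)
    exact ((ENNReal.ofReal_lt_ofReal_iff hr0).mp (hle.trans_lt hSlt.2)).le

lemma dconcPi_le_of_boxPi_lt [IsProbabilityMeasure μX] [IsProbabilityMeasure μY]
    {π : Measure (X × Y)} [IsProbabilityMeasure π]
    (hπ1 : π.map Prod.fst = μX) (hπ2 : π.map Prod.snd = μY)
    {G : Set (X → X)} (hG : IsClosedAutSubgroup μX G)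
    {H : Set (Y → Y)} (hH : IsClosedAutSubgroup μY H)
    {r : ℝ} (hr0 : 0 < r) (hr4 : r < 1/4)
    (hbox : boxPi π G H < ENNReal.ofReal r) :
    dconcPi π G H ≤ 4*r := by
  rw [boxPi, max_lt_iff] at hbox
  have comp1 : ∀ g ∈ G, ∃ h ∈ H, dPi π g h < ENNReal.ofReal r := by
    intro g hg
    have h1 : (⨅ h ∈ H, dPi π g h) < ENNReal.ofReal r :=
      lt_of_le_of_lt (le_iSup₂ (f := fun g (_ : g ∈ G) => ⨅ h ∈ H, dPi π g h) g hg) hbox.1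
    rw [iInf_lt_iff] at h1
    obtain ⟨h, h2⟩ := h1
    rw [iInf_lt_iff] at h2
    obtain ⟨hh, h3⟩ := h2
    exact ⟨h, hh, h3⟩
  have comp2 : ∀ h ∈ H, ∃ g ∈ G, dPi π g h < ENNReal.ofReal r := by
    intro h hh
    have h1 : (⨅ g ∈ G, dPi π g h) < ENNReal.ofReal r :=
      lt_of_le_of_lt (le_iSup₂ (f := fun h (_ : h ∈ H) => ⨅ g ∈ G, dPi π g h) h hh) hbox.2
    rw [iInf_lt_iff] at h1
    obtain ⟨g, h2⟩ := h1
    rw [iInf_lt_iff] at h2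
    obtain ⟨hg, h3⟩ := h2
    exact ⟨g, hg, h3⟩
  -- reference closed set coming from `id ∈ G`
  obtain ⟨h₀, hh₀, hdPi₀⟩ := comp1 id hG.2.1
  obtain ⟨S₀, hS₀c, hS₀m, hS₀d⟩ := exists_set_of_dPi_lt hr0 hdPi₀
  have hS₀B : ∀ p ∈ S₀, ∀ q ∈ S₀, |dist p.1 q.1 - dist p.2 q.2| ≤ 2*r := by
    intro p hp q hq
    have hdiag := hS₀d p hp p hp
    simp only [id_eq, dist_self, zero_sub, abs_neg, abs_dist] at hdiag
    have hpq := hS₀d p hp q hq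
    simp only [id_eq] at hpq
    have htri : |dist (h₀ p.2) q.2 - dist p.2 q.2| ≤ dist (h₀ p.2) p.2 := abs_dist_sub_le _ _ _
    rw [abs_sub_le_iff]
    rw [abs_sub_le_iff] at hpq htri
    constructor <;> linarith [hpq.1, hpq.2, htri.1, htri.2, hdiag]
  -- key : for every matched pair, rhoPi is small
  have key : ∀ g ∈ G, ∀ h ∈ H, dPi π g h < ENNReal.ofReal r → rhoPi π g h ≤ 4*r := by
    intro g hg h hh hd
    obtain ⟨S, hSc, hSm, hSd⟩ := exists_set_of_dPi_lt hr0 hd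
    set T := S ∩ S₀ with hT
    have hTc : IsClosed T := hSc.inter hS₀c
    have hTm : π Tᶜ ≤ ENNReal.ofReal (2*r) := by
      have : Tᶜ = Sᶜ ∪ S₀ᶜ := by rw [hT, Set.compl_inter]
      rw [this]
      calc π (Sᶜ ∪ S₀ᶜ) ≤ π Sᶜ + π S₀ᶜ := measure_union_le _ _
        _ ≤ ENNReal.ofReal r + ENNReal.ofReal r := add_le_add hSm hS₀m
        _ = ENNReal.ofReal (2*r) := by
            rw [← ENNReal.ofReal_add hr0.le hr0.le]; ring_nf
    exact rhoPi_le_main hπ1 hπ2 (hG.1 g hg) (hH.1 h hh) hr0 (by linarith) hTc hTm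
      (fun p hp q hq => hSd p hp.1 q hq.1)
      (fun p hp q hq => hS₀B p hp.2 q hq.2)
  have h4r : (0:ℝ) ≤ 4*r := by linarith
  refine max_le ?_ ?_
  · refine Real.sSup_le ?_ h4r
    rintro _ ⟨g, hg, rfl⟩
    obtain ⟨h, hh, hd⟩ := comp1 g hg
    have hbdd : BddBelow (Set.range fun h => ⨅ _ : h ∈ H, rhoPi π g h) := by
      refine ⟨0, ?_⟩
      rintro v ⟨h', rfl⟩
      exact Real.iInf_nonneg fun _ => rhoPi_nonneg _ _ _
    exact (sInf_image_le_of_nonneg (F := fun h => rhoPi π g h) (fun _ => rhoPi_nonneg _ _ _)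
      hh).trans (key g hg h hh hd)
  · refine Real.sSup_le ?_ h4r
    rintro _ ⟨h, hh, rfl⟩
    obtain ⟨g, hg, hd⟩ := comp2 h hh
    have hbdd : BddBelow (Set.range fun g => ⨅ _ : g ∈ G, rhoPi π g h) := by
      refine ⟨0, ?_⟩
      rintro v ⟨g', rfl⟩
      exact Real.iInf_nonneg fun _ => rhoPi_nonneg _ _ _
    exact (sInf_image_le_of_nonneg (F := fun g => rhoPi π g h) (fun _ => rhoPi_nonneg _ _ _)
      hg).trans (key g hg h hh hd)

omit [BorelSpace X] [SecondCountableTopology X] [BorelSpace Y] [SecondCountableTopology Y] in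
lemma dconcPi_nonneg (π : Measure (X × Y)) (G : Set (X → X)) (H : Set (Y → Y)) :
    0 ≤ dconcPi π G H := by
  refine le_max_of_le_left (Real.sSup_nonneg ?_)
  rintro _ ⟨g, hg, rfl⟩
  exact Real.sInf_nonneg (by rintro _ ⟨h, _, rfl⟩; exact rhoPi_nonneg _ _ _)

omit [BorelSpace X] [SecondCountableTopology X] [BorelSpace Y] [SecondCountableTopology Y] in
lemma dconcPi_le_one {π : Measure (X × Y)} [IsProbabilityMeasure π]
    {G : Set (X → X)} {H : Set (Y → Y)} (hGid : id ∈ G) (hHid : id ∈ H) :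
    dconcPi π G H ≤ 1 := by
  refine max_le ?_ ?_
  · refine Real.sSup_le ?_ zero_le_one
    rintro _ ⟨g, hg, rfl⟩
    have hbdd : BddBelow (Set.range fun h => ⨅ _ : h ∈ H, rhoPi π g h) := by
      refine ⟨0, ?_⟩
      rintro v ⟨h', rfl⟩
      exact Real.iInf_nonneg fun _ => rhoPi_nonneg _ _ _
    exact (sInf_image_le_of_nonneg (F := fun h => rhoPi π g h) (fun _ => rhoPi_nonneg _ _ _)
      hHid).trans (rhoPi_le_one _ _)
  · refine Real.sSup_le ?_ zero_le_one
    rintro _ ⟨h, hh, rfl⟩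
    have hbdd : BddBelow (Set.range fun g => ⨅ _ : g ∈ G, rhoPi π g h) := by
      refine ⟨0, ?_⟩
      rintro v ⟨g', rfl⟩
      exact Real.iInf_nonneg fun _ => rhoPi_nonneg _ _ _
    exact (sInf_image_le_of_nonneg (F := fun g => rhoPi π g h) (fun _ => rhoPi_nonneg _ _ _)
      hGid).trans (rhoPi_le_one _ _)

omit [BorelSpace X] [SecondCountableTopology X] [BorelSpace Y] [SecondCountableTopology Y] in
lemma eqDconc_le {π : Measure (X × Y)} (hπ : π ∈ couplings μX μY)
    (G : Set (X → X)) (H : Set (Y → Y)) :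
    eqDconc μX μY G H ≤ dconcPi π G H := by
  have hbdd : BddBelow (Set.range fun π' : Measure (X × Y) =>
      ⨅ _ : π' ∈ couplings μX μY, dconcPi π' G H) := by
    refine ⟨0, ?_⟩
    rintro v ⟨π', rfl⟩
    exact Real.iInf_nonneg fun _ => dconcPi_nonneg _ _ _
  exact sInf_image_le_of_nonneg (F := fun π' => dconcPi π' G H) (fun _ => dconcPi_nonneg _ _ _) hπ

end EqProofAux

/-- `d_conc((X,G),(Y,H)) ≤ 4·□((X,G),(Y,H))`. -/
theorem stmt_9 {X Y : Type*} [MetricSpace X] [CompleteSpace X] [SeparableSpace X] [MeasurableSpace X] [BorelSpace X]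
    (μX : Measure X) [IsProbabilityMeasure μX] [μX.IsOpenPosMeasure]
    [MetricSpace Y] [CompleteSpace Y] [SeparableSpace Y] [MeasurableSpace Y] [BorelSpace Y]
    (μY : Measure Y) [IsProbabilityMeasure μY] [μY.IsOpenPosMeasure]
    (G : Set (X → X)) (hG : IsClosedAutSubgroup μX G)
    (H : Set (Y → Y)) (hH : IsClosedAutSubgroup μY H) :
    ENNReal.ofReal (eqDconc μX μY G H) ≤ 4 * eqBox μX μY G H := by
  
  classical
  by_cases htop : eqBox μX μY G H = ∞
  · rw [htop]
    simp
  apply ENNReal.le_of_forall_pos_le_add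
  intro ε' hε' _
  have hε'R : (0:ℝ) < (ε' : ℝ) := hε'
  set t : ℝ := (eqBox μX μY G H).toReal with ht
  have ht0 : 0 ≤ t := ENNReal.toReal_nonneg
  set r : ℝ := t + (ε' : ℝ)/4 with hr
  clear_value t r
  have hr0 : 0 < r := by rw [hr]; positivity
  have hlt : eqBox μX μY G H < ENNReal.ofReal r := by
    rw [hr, ENNReal.ofReal_add ht0 (by positivity), ht, ENNReal.ofReal_toReal htop]
    refine ENNReal.lt_add_right htop ?_
    simp only [ne_eq, ENNReal.ofReal_eq_zero, not_le]
    positivity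
  obtain ⟨π, hπmem, hπlt⟩ : ∃ π ∈ couplings μX μY, boxPi π G H < ENNReal.ofReal r := by
    rw [eqBox, iInf_lt_iff] at hlt
    obtain ⟨π, h1⟩ := hlt
    rw [iInf_lt_iff] at h1
    obtain ⟨hmem, h2⟩ := h1
    exact ⟨π, hmem, h2⟩
  have hπprob : IsProbabilityMeasure π := by
    constructor
    have h1 : π.map Prod.fst Set.univ = (1 : ℝ≥0∞) := by rw [hπmem.1, measure_univ]
    rwa [Measure.map_apply measurable_fst MeasurableSet.univ, Set.preimage_univ] at h1
  have hd : dconcPi π G H ≤ 4*r := by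
    by_cases hr4 : r < 1/4
    · exact EqProofAux.dconcPi_le_of_boxPi_lt hπmem.1 hπmem.2 hG hH hr0 hr4 hπlt
    · refine (EqProofAux.dconcPi_le_one hG.2.1 hH.2.1).trans ?_
      push_neg at hr4
      linarith
  have h1 : eqDconc μX μY G H ≤ 4*r := (EqProofAux.eqDconc_le hπmem G H).trans hd
  have h2 : ENNReal.ofReal (eqDconc μX μY G H) ≤ ENNReal.ofReal (4*r) :=
    ENNReal.ofReal_le_ofReal h1
  refine h2.trans ?_
  have h3 : 4*r = 4*t + (ε' : ℝ) := by rw [hr]; ring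
  rw [h3, ENNReal.ofReal_add (by positivity) hε'R.le, ENNReal.ofReal_mul (by norm_num : (0:ℝ) ≤ 4),
    ht, ENNReal.ofReal_toReal htop, ENNReal.ofReal_coe_nnreal]
  gcongr
  norm_num


end
end

section
/- Let X be an mm-space and let G ⊆ Aut(X) be a subgroup that is closed with respect to the Ky Fan metric (equivalently, closed under convergence in μ_X-measure). Then for every x ∈ X the orbit Gx = {g(x) : g ∈ G} is a closed subset of X; in particular, the quotient pseudometric d_{X/G}(Gx, Gx') := inf_{g∈G} d_X(g(x), x') on the orbit space is a metric. -/
open MeasureTheory Metric Filter Set TopologicalSpace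
open scoped ENNReal Topology


noncomputable section

section KF
variable {Ω : Type*} [MeasurableSpace Ω] (μ : Measure Ω)
    {Z : Type*} [PseudoMetricSpace Z] (u u' : Ω → Z)

lemma kyFan_nonneg : 0 ≤ kyFan μ u u' :=
  Real.sInf_nonneg fun _ h => h.1

lemma kyFan_le {ε : ℝ} (h0 : 0 ≤ ε)
    (h : μ {ω | ε < dist (u ω) (u' ω)} ≤ ENNReal.ofReal ε) : kyFan μ u u' ≤ ε :=
  csInf_le ⟨0, fun _ h => h.1⟩ ⟨h0, h⟩

lemma measure_le_of_kyFan_lt [IsProbabilityMeasure μ] {c : ℝ}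
    (h : kyFan μ u u' < c) : μ {ω | c < dist (u ω) (u' ω)} ≤ ENNReal.ofReal c := by
  have hne : {ε : ℝ | 0 ≤ ε ∧ μ {ω | ε < dist (u ω) (u' ω)} ≤ ENNReal.ofReal ε}.Nonempty := by
    refine ⟨1, zero_le_one, ?_⟩
    rw [ENNReal.ofReal_one]
    exact prob_le_one
  obtain ⟨ε', hε', hlt⟩ := exists_lt_of_csInf_lt hne h
  calc μ {ω | c < dist (u ω) (u' ω)} ≤ μ {ω | ε' < dist (u ω) (u' ω)} := by
        apply measure_mono
        intro ω hω
        exact lt_trans hlt hω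
    _ ≤ ENNReal.ofReal ε' := hε'.2
    _ ≤ ENNReal.ofReal c := ENNReal.ofReal_le_ofReal hlt.le

end KF

section Tight

variable {X : Type*} [MetricSpace X] [CompleteSpace X] [SeparableSpace X]
  [MeasurableSpace X] [BorelSpace X]

/-- Ulam tightness for probability measures on Polish spaces. -/
lemma tight_aux (μ : Measure X) [IsProbabilityMeasure μ] [Nonempty X] {δ : ℝ≥0∞} (hδ : 0 < δ) :
    ∃ K : Set X, IsCompact K ∧ μ Kᶜ < δ := by
  rcases eq_or_ne δ ∞ with rfl | hδtop
  · exact ⟨∅, isCompact_empty, (measure_lt_top μ _).trans_le le_top⟩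
  obtain ⟨u, hu⟩ := TopologicalSpace.exists_dense_seq X
  set B : ℕ → ℕ → Set X := fun k n => closedBall (u n) (1 / (k + 1)) with hB
  have hBmeas : ∀ k n, MeasurableSet (B k n) := fun k n => measurableSet_closedBall
  have hcov : ∀ k, (⋃ n, B k n) = univ := by
    intro k
    apply eq_univ_of_forall
    intro z
    obtain ⟨n, hn⟩ := hu.exists_dist_lt z (by positivity : (0:ℝ) < 1 / (k+1))
    exact mem_iUnion.mpr ⟨n, mem_closedBall.mpr hn.le⟩
  have hacc : ∀ k, Tendsto (fun N => μ (accumulate (B k) N)ᶜ) atTop (𝓝 0) := by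
    intro k
    have h1 : Tendsto (μ ∘ fun N => (accumulate (B k) N)ᶜ) atTop
        (𝓝 (μ (⋂ N, (accumulate (B k) N)ᶜ))) := by
      apply tendsto_measure_iInter_atTop
      · intro N
        rw [Set.accumulate_def]
        exact ((MeasurableSet.biUnion ((Set.finite_Iic N).countable)
          (fun i _ => hBmeas k i)).compl).nullMeasurableSet
      · intro a b hab
        exact compl_subset_compl.mpr (monotone_accumulate hab)
      · exact ⟨0, measure_ne_top μ _⟩
    have h2 : (⋂ N, (accumulate (B k) N)ᶜ) = ∅ := by
      rw [← compl_iUnion, iUnion_accumulate, hcov k, compl_univ]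
    rw [h2, measure_empty] at h1
    exact h1
  have hδ4 : ∀ k : ℕ, (0:ℝ≥0∞) < δ / 4 * (2⁻¹ : ℝ≥0∞) ^ k := by
    intro k
    apply ENNReal.mul_pos
    · exact (ENNReal.div_pos hδ.ne' (by norm_num)).ne'
    · exact (ENNReal.pow_pos (by norm_num) k).ne'
  have hN : ∀ k : ℕ, ∃ N, μ (accumulate (B k) N)ᶜ < δ / 4 * (2⁻¹:ℝ≥0∞) ^ k := by
    intro k
    have := (hacc k).eventually (gt_mem_nhds (hδ4 k))
    exact this.exists
  choose N hNlt using hN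
  set K : Set X := ⋂ k, accumulate (B k) (N k) with hK
  have hKclosed : IsClosed K := by
    apply isClosed_iInter
    intro k
    rw [Set.accumulate_def]
    exact (Set.finite_Iic (N k)).isClosed_biUnion (fun i _ => isClosed_closedBall)
  have hKtb : TotallyBounded K := by
    rw [Metric.totallyBounded_iff]
    intro ε hε
    obtain ⟨k, hk⟩ := exists_nat_one_div_lt hε
    refine ⟨u '' Iic (N k), (Set.finite_Iic (N k)).image u, ?_⟩
    intro z hz
    have hz' : z ∈ accumulate (B k) (N k) := mem_iInter.mp hz k
    rw [Set.accumulate_def] at hz'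
    obtain ⟨i, hi, hzi⟩ := mem_iUnion₂.mp hz'
    refine mem_iUnion₂.mpr ⟨u i, mem_image_of_mem u hi, ?_⟩
    exact mem_ball'.mpr ((mem_closedBall'.mp hzi).trans_lt hk)
  refine ⟨K, TotallyBounded.isCompact_of_isClosed hKtb hKclosed, ?_⟩
  have : μ Kᶜ ≤ ∑' k, μ (accumulate (B k) (N k))ᶜ := by
    rw [hK, compl_iInter]
    exact measure_iUnion_le _
  have hsum : ∑' k, μ (accumulate (B k) (N k))ᶜ ≤ ∑' k : ℕ, δ / 4 * (2⁻¹:ℝ≥0∞) ^ k :=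
    ENNReal.tsum_le_tsum fun k => (hNlt k).le
  have hgeo : ∑' k : ℕ, δ / 4 * (2⁻¹:ℝ≥0∞) ^ k = δ / 2 := by
    rw [ENNReal.tsum_mul_left, ENNReal.tsum_geometric]
    rw [ENNReal.one_sub_inv_two, inv_inv]
    rw [div_eq_mul_inv, div_eq_mul_inv, mul_assoc]
    congr 1
    rw [show (4:ℝ≥0∞) = 2*2 by norm_num,
      ENNReal.mul_inv (Or.inl two_ne_zero) (Or.inl (by norm_num)), mul_assoc,
      ENNReal.inv_mul_cancel two_ne_zero (by norm_num), mul_one]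
  calc μ Kᶜ ≤ δ / 2 := this.trans (hsum.trans_eq hgeo)
    _ < δ := ENNReal.half_lt_self hδ.ne' hδtop

end Tight


section Dense
variable {X : Type*} [MetricSpace X] [MeasurableSpace X] [BorelSpace X]

/-- If every thickening of `U` has almost full measure, then `U` is dense. -/
lemma dense_aux (μ : Measure X) [IsProbabilityMeasure μ] [μ.IsOpenPosMeasure] (U : Set X)
    (h : ∀ ε : ℝ, 0 < ε → ∀ δ : ℝ≥0∞, 0 < δ → 1 ≤ μ (thickening ε U) + δ) : Dense U := by
  have hthick : ∀ ε : ℝ, 0 < ε → μ (thickening ε U) = 1 := by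
    intro ε hε
    refine le_antisymm prob_le_one ?_
    apply ENNReal.le_of_forall_pos_le_add
    intro r hr _
    exact h ε hε r (by exact_mod_cast hr)
  have hclosure : μ (closure U) = 1 := by
    have h1 : Tendsto (fun r : ℝ => μ (thickening r U)) (𝓝[>] 0) (𝓝 (μ (closure U))) :=
      tendsto_measure_thickening ⟨1, one_pos, measure_ne_top μ _⟩
    have h2 : Tendsto (fun r : ℝ => μ (thickening r U)) (𝓝[>] 0) (𝓝 1) := by
      apply Tendsto.congr' (f₁ := fun _ : ℝ => (1:ℝ≥0∞)) _ tendsto_const_nhds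
      filter_upwards [self_mem_nhdsWithin] with r hr
      exact (hthick r hr).symm
    exact tendsto_nhds_unique h1 h2
  rw [dense_iff_closure_eq]
  by_contra hne
  have hcompl : ((closure U)ᶜ).Nonempty := by
    rw [nonempty_compl]
    exact hne
  have hpos : 0 < μ (closure U)ᶜ := isClosed_closure.isOpen_compl.measure_pos μ hcompl
  rw [prob_compl_eq_one_sub isClosed_closure.measurableSet, hclosure] at hpos
  simp at hpos

end Dense

section Extend
variable {X : Type*} [MetricSpace X] [CompleteSpace X]

/-- Extension of a partially defined isometry with dense domain. -/
lemma extend_aux (Λ : Set (X × X))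
    (hrel : ∀ p ∈ Λ, ∀ q ∈ Λ, dist p.2 q.2 = dist p.1 q.1)
    (hdense : Dense (Prod.fst '' Λ)) :
    ∃ g : X → X, Isometry g ∧ ∀ p ∈ Λ, g p.1 = p.2 := by
  classical
  set D : Set X := Prod.fst '' Λ with hD
  have hmemD : ∀ a ∈ D, ∃ b, (a, b) ∈ Λ := by
    rintro a ⟨p, hp, rfl⟩
    exact ⟨p.2, hp⟩
  set f : X → X := fun a => if h : a ∈ D then (hmemD a h).choose else a with hf
  have hfΛ : ∀ a (h : a ∈ D), (a, f a) ∈ Λ := by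
    intro a h
    simp only [hf, dif_pos h]
    exact (hmemD a h).choose_spec
  have hfiso : ∀ a ∈ D, ∀ a' ∈ D, dist (f a) (f a') = dist a a' := by
    intro a ha a' ha'
    exact hrel (a, f a) (hfΛ a ha) (a', f a') (hfΛ a' ha')
  -- approximating sequences
  have hseq : ∀ z : X, ∀ k : ℕ, ∃ a, a ∈ D ∧ dist z a < 1 / (k + 1) := by
    intro z k
    have := Metric.mem_closure_iff.mp (hdense z) (1 / (k+1)) (by positivity)
    obtain ⟨a, ha, hd⟩ := this
    exact ⟨a, ha, hd⟩
  choose s hsD hsdist using hseq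
  have hstend : ∀ z : X, Tendsto (fun k => s z k) atTop (𝓝 z) := by
    intro z
    rw [tendsto_iff_dist_tendsto_zero]
    apply squeeze_zero (fun k => dist_nonneg) (fun k => (dist_comm (s z k) z ▸ hsdist z k).le)
    exact tendsto_one_div_add_atTop_nhds_zero_nat
  have hcauchy : ∀ z : X, CauchySeq (fun k => f (s z k)) := by
    intro z
    refine cauchySeq_of_le_tendsto_0 (fun N : ℕ => 2 / (N + 1)) ?_ ?_
    · intro k l N hk hl
      rw [hfiso _ (hsD z k) _ (hsD z l)]
      have h1 : dist (s z k) (s z l) ≤ dist z (s z k) + dist z (s z l) :=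
        dist_triangle_left _ _ _
      have hk' : (N:ℝ) + 1 ≤ (k:ℝ) + 1 := by
        have : (N:ℝ) ≤ k := Nat.cast_le.mpr hk
        linarith
      have hl' : (N:ℝ) + 1 ≤ (l:ℝ) + 1 := by
        have : (N:ℝ) ≤ l := Nat.cast_le.mpr hl
        linarith
      have h2 : dist z (s z k) < 1 / (N+1) :=
        (hsdist z k).trans_le (one_div_le_one_div_of_le (by positivity) hk')
      have h3 : dist z (s z l) < 1 / (N+1) :=
        (hsdist z l).trans_le (one_div_le_one_div_of_le (by positivity) hl')
      have : (2:ℝ) / (N+1) = 1/(N+1) + 1/(N+1) := by ring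
      linarith
    · have : (fun N : ℕ => 2 / (N+1) : ℕ → ℝ) = (fun N : ℕ => 2 * (1 / ((N:ℝ)+1))) := by
        funext N; ring
      rw [this]
      simpa using tendsto_one_div_add_atTop_nhds_zero_nat.const_mul (2:ℝ)
  have hlim : ∀ z : X, ∃ L, Tendsto (fun k => f (s z k)) atTop (𝓝 L) :=
    fun z => cauchySeq_tendsto_of_complete (hcauchy z)
  choose g hg using hlim
  -- key: any D-valued sequence converging to z pushes to g z
  have key : ∀ z : X, ∀ a : ℕ → X, (∀ k, a k ∈ D) → Tendsto a atTop (𝓝 z) →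
      Tendsto (fun k => f (a k)) atTop (𝓝 (g z)) := by
    intro z a haD haz
    apply Filter.Tendsto.congr_dist (hg z)
    have heq : ∀ k, dist (f (s z k)) (f (a k)) = dist (s z k) (a k) :=
      fun k => hfiso _ (hsD z k) _ (haD k)
    simp only [heq]
    have h1 : Tendsto (fun k => dist (s z k) (a k)) atTop (𝓝 (dist z z)) :=
      (hstend z).dist haz
    simpa using h1
  have giso : Isometry g := by
    apply Isometry.of_dist_eq
    intro z z'
    have T1 : Tendsto (fun k => dist (f (s z k)) (f (s z' k))) atTop
        (𝓝 (dist (g z) (g z'))) := (hg z).dist (hg z')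
    have T2 : Tendsto (fun k => dist (f (s z k)) (f (s z' k))) atTop (𝓝 (dist z z')) := by
      have heq : ∀ k, dist (f (s z k)) (f (s z' k)) = dist (s z k) (s z' k) :=
        fun k => hfiso _ (hsD z k) _ (hsD z' k)
      simp only [heq]
      exact (hstend z).dist (hstend z')
    exact tendsto_nhds_unique T1 T2
  refine ⟨g, giso, ?_⟩
  rintro p hp
  have hp1 : p.1 ∈ D := ⟨p, hp, rfl⟩
  have h1 : Tendsto (fun _ : ℕ => f p.1) atTop (𝓝 (g p.1)) :=
    key p.1 (fun _ => p.1) (fun _ => hp1) tendsto_const_nhds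
  have h2 : g p.1 = f p.1 := tendsto_nhds_unique h1 tendsto_const_nhds
  have h3 : dist (f p.1) p.2 = 0 := by
    have := hrel (p.1, f p.1) (hfΛ p.1 hp1) p hp
    simpa using this
  rw [h2]
  exact dist_eq_zero.mp h3

end Extend


section Main
variable {X : Type*} [MetricSpace X] [CompleteSpace X] [SeparableSpace X]
  [MeasurableSpace X] [BorelSpace X]

lemma conv_aux (μ : Measure X) [IsProbabilityMeasure μ] [μ.IsOpenPosMeasure] [Nonempty X]
    (g : ℕ → X → X) (hiso : ∀ n, Isometry (g n)) (hmap : ∀ n, Measure.map (g n) μ = μ)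
    (hinv : ∀ n, ∃ h : X → X, Isometry h ∧ Measure.map h μ = μ ∧
      (∀ z, g n (h z) = z) ∧ (∀ z, h (g n z) = z)) :
    ∃ (G : X → X) (nseq : ℕ → ℕ), IsAut μ G ∧ (∀ k, k ≤ nseq k) ∧
      (∀ k, kyFan μ (g (nseq k)) G ≤ 1 / (k + 1)) ∧
      (∀ z, Tendsto (fun k => g (nseq k) z) atTop (𝓝 (G z))) := by
  classical
  have hgmeas : ∀ n, Measurable (g n) := fun n => (hiso n).continuous.measurable
  have hpre : ∀ n (S : Set X), MeasurableSet S → μ (g n ⁻¹' S) = μ S := by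
    intro n S hS
    rw [← Measure.map_apply (hgmeas n) hS, hmap n]
  -- tight exhaustion
  have hK : ∀ m : ℕ, ∃ K : Set X, IsCompact K ∧ μ Kᶜ < ((m:ℝ≥0∞))⁻¹ :=
    fun m => tight_aux μ (ENNReal.inv_pos.mpr (by simp))
  choose K hKcomp hKlt using hK
  set C : ℕ → Set (X × X) := fun m => (K m) ×ˢ (K m) with hC
  have hCcomp : ∀ m, IsCompact (C m) := fun m => (hKcomp m).prod (hKcomp m)
  -- the ultrafilter
  set 𝒰 : Ultrafilter ℕ := Ultrafilter.of atTop with h𝒰def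
  have h𝒰 : (𝒰 : Filter ℕ) ≤ atTop := Ultrafilter.of_le _
  -- partial graphs as closed subsets of the compact C m
  set Γ : ∀ m : ℕ, ℕ → Closeds ↥(C m) := fun m n =>
    ⟨{q : ↥(C m) | (q : X × X).2 = g n (q : X × X).1},
      (isClosed_eq continuous_snd ((hiso n).continuous.comp continuous_fst)).preimage
        continuous_subtype_val⟩ with hΓ
  -- ultrafilter limits
  have hlim : ∀ m : ℕ, ∃ L : Closeds ↥(C m), Tendsto (fun n => Γ m n) (𝒰 : Filter ℕ) (𝓝 L) := by
    intro m
    haveI := isCompact_iff_compactSpace.mp (hCcomp m)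
    obtain ⟨L, _, hL⟩ := (isCompact_univ (X := Closeds ↥(C m))).ultrafilter_le_nhds
      (𝒰.map (Γ m)) (by rw [le_principal_iff]; exact univ_mem)
    refine ⟨L, ?_⟩
    rw [Ultrafilter.coe_map] at hL
    exact hL
  choose Λ' hΛ' using hlim
  have hconv : ∀ m : ℕ, ∀ ε : ℝ≥0∞, 0 < ε →
      {n | EMetric.hausdorffEdist ((Γ m n : Set ↥(C m))) ((Λ' m : Set ↥(C m))) < ε} ∈ 𝒰 := by
    intro m ε hε
    have := (EMetric.tendsto_nhds.mp (hΛ' m)) ε hε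
    simp only [EMetric.Closeds.edist_eq] at this
    exact this
  set Λm : ℕ → Set (X × X) := fun m => Subtype.val '' ((Λ' m : Set ↥(C m))) with hΛm
  set ΛU : Set (X × X) := ⋃ m, Λm m with hΛU
  -- approximation of limit points by graph points
  have happrox : ∀ m : ℕ, ∀ p ∈ Λm m, ∀ ε : ℝ, 0 < ε → ∀ n,
      EMetric.hausdorffEdist ((Γ m n : Set ↥(C m))) ((Λ' m : Set ↥(C m))) < ENNReal.ofReal ε →
      ∃ z, z ∈ K m ∧ g n z ∈ K m ∧ dist p.1 z < ε ∧ dist p.2 (g n z) < ε := by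
    rintro m p ⟨a, ha, rfl⟩ ε hε n hn
    change hausdorffEDist _ _ < _ at hn
    rw [EMetric.hausdorffEdist_comm] at hn
    obtain ⟨w, hw, hdw⟩ := EMetric.exists_edist_lt_of_hausdorffEdist_lt ha hn
    have hw2 : (w : X × X).2 = g n (w : X × X).1 := hw
    have hd : dist (a : X × X).1 (w : X × X).1 < ε ∧ dist (a : X × X).2 (w : X × X).2 < ε := by
      rw [Subtype.edist_eq, Prod.edist_eq, max_lt_iff] at hdw
      exact ⟨edist_lt_ofReal.mp hdw.1, edist_lt_ofReal.mp hdw.2⟩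
    refine ⟨(w : X × X).1, (mem_prod.mp w.property).1, ?_, hd.1, ?_⟩
    · rw [← hw2]; exact (mem_prod.mp w.property).2
    · rw [← hw2]; exact hd.2
  -- approximation of graph points by limit points
  have hpoint : ∀ m n : ℕ, ∀ ε : ℝ, 0 < ε →
      EMetric.hausdorffEdist ((Γ m n : Set ↥(C m))) ((Λ' m : Set ↥(C m))) < ENNReal.ofReal ε →
      ∀ z, z ∈ K m → g n z ∈ K m →
      ∃ p ∈ Λm m, dist z p.1 < ε ∧ dist (g n z) p.2 < ε := by
    intro m n ε hε hn z hz hgz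
    set q : ↥(C m) := ⟨(z, g n z), mem_prod.mpr ⟨hz, hgz⟩⟩ with hq
    have hqΓ : q ∈ (Γ m n : Set ↥(C m)) := rfl
    obtain ⟨r, hr, hdr⟩ := EMetric.exists_edist_lt_of_hausdorffEdist_lt hqΓ hn
    have hd : dist z (r : X × X).1 < ε ∧ dist (g n z) (r : X × X).2 < ε := by
      rw [Subtype.edist_eq, Prod.edist_eq, max_lt_iff] at hdr
      exact ⟨edist_lt_ofReal.mp hdr.1, edist_lt_ofReal.mp hdr.2⟩
    exact ⟨(r : X × X), ⟨r, hr, rfl⟩, hd.1, hd.2⟩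
  -- the isometry relation on ΛU
  have hrel : ∀ p ∈ ΛU, ∀ q ∈ ΛU, dist p.2 q.2 = dist p.1 q.1 := by
    intro p hp q hq
    obtain ⟨m₁, hpm⟩ := mem_iUnion.mp hp
    obtain ⟨m₂, hqm⟩ := mem_iUnion.mp hq
    have hbound : ∀ ε : ℝ, 0 < ε →
        dist p.2 q.2 ≤ dist p.1 q.1 + 4 * ε ∧ dist p.1 q.1 ≤ dist p.2 q.2 + 4 * ε := by
      intro ε hε
      have h1 := hconv m₁ (ENNReal.ofReal ε) (ENNReal.ofReal_pos.mpr hε)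
      have h2 := hconv m₂ (ENNReal.ofReal ε) (ENNReal.ofReal_pos.mpr hε)
      obtain ⟨n, hn1, hn2⟩ := Ultrafilter.nonempty_of_mem (inter_mem h1 h2)
      obtain ⟨z, _, _, hz1, hz2⟩ := happrox m₁ p hpm ε hε n hn1
      obtain ⟨w, _, _, hw1, hw2⟩ := happrox m₂ q hqm ε hε n hn2
      have hgzw : dist (g n z) (g n w) = dist z w := (hiso n).dist_eq z w
      constructor
      · calc dist p.2 q.2 ≤ dist p.2 (g n z) + dist (g n z) (g n w) + dist (g n w) q.2 :=
              dist_triangle4 _ _ _ _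
          _ ≤ ε + dist z w + ε := by
              rw [hgzw]
              have e1 : dist (g n w) q.2 < ε := by rw [dist_comm]; exact hw2
              have e2 : dist p.2 (g n z) < ε := hz2
              apply add_le_add (add_le_add e2.le le_rfl) e1.le
          _ ≤ ε + (dist z p.1 + dist p.1 q.1 + dist q.1 w) + ε := by
              have := dist_triangle4 z p.1 q.1 w
              linarith
          _ ≤ dist p.1 q.1 + 4 * ε := by
              have e1 : dist z p.1 < ε := by rw [dist_comm]; exact hz1
              have e2 : dist q.1 w < ε := hw1
              linarith
      · calc dist p.1 q.1 ≤ dist p.1 z + dist z w + dist w q.1 := dist_triangle4 _ _ _ _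
          _ ≤ ε + dist (g n z) (g n w) + ε := by
              rw [hgzw]
              have e1 : dist p.1 z < ε := hz1
              have e2 : dist w q.1 < ε := by rw [dist_comm]; exact hw1
              apply add_le_add (add_le_add e1.le le_rfl) e2.le
          _ ≤ ε + (dist (g n z) p.2 + dist p.2 q.2 + dist q.2 (g n w)) + ε := by
              have := dist_triangle4 (g n z) p.2 q.2 (g n w)
              linarith
          _ ≤ dist p.2 q.2 + 4 * ε := by
              have e1 : dist (g n z) p.2 < ε := by rw [dist_comm]; exact hz2
              have e2 : dist q.2 (g n w) < ε := hw2
              linarith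
    have hle1 : dist p.2 q.2 ≤ dist p.1 q.1 := by
      apply le_of_forall_pos_le_add
      intro ε hε
      have := (hbound (ε/4) (by positivity)).1
      linarith
    have hle2 : dist p.1 q.1 ≤ dist p.2 q.2 := by
      apply le_of_forall_pos_le_add
      intro ε hε
      have := (hbound (ε/4) (by positivity)).2
      linarith
    exact le_antisymm hle1 hle2
  -- measure bound for good sets
  have hA : ∀ m n : ℕ, μ (K m ∩ g n ⁻¹' (K m))ᶜ ≤ 2 * ((m:ℝ≥0∞))⁻¹ := by
    intro m n
    rw [compl_inter]
    calc μ ((K m)ᶜ ∪ (g n ⁻¹' (K m))ᶜ) ≤ μ (K m)ᶜ + μ (g n ⁻¹' (K m))ᶜ := measure_union_le _ _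
      _ = μ (K m)ᶜ + μ (K m)ᶜ := by
          rw [← preimage_compl, hpre n _ (hKcomp m).isClosed.measurableSet.compl]
      _ ≤ ((m:ℝ≥0∞))⁻¹ + ((m:ℝ≥0∞))⁻¹ := by gcongr <;> exact (hKlt m).le
      _ = 2 * ((m:ℝ≥0∞))⁻¹ := (two_mul _).symm
  have hmδ : ∀ δ : ℝ≥0∞, 0 < δ → ∃ m : ℕ, 2 * ((m:ℝ≥0∞))⁻¹ < δ := by
    intro δ hδ
    obtain ⟨m, hm⟩ := ENNReal.exists_inv_nat_lt (show δ/2 ≠ 0 by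
      simp [ENNReal.div_eq_zero_iff, hδ.ne'])
    refine ⟨m, ?_⟩
    calc 2 * ((m:ℝ≥0∞))⁻¹ < 2 * (δ / 2) := by
          rw [ENNReal.mul_lt_mul_iff_right (by norm_num) (by norm_num)]
          exact hm
      _ = δ := ENNReal.mul_div_cancel' (by norm_num) (by norm_num)
  -- density of first projections
  have hdense1 : Dense (Prod.fst '' ΛU) := by
    apply dense_aux μ
    intro ε hε δ hδ
    obtain ⟨m, hm⟩ := hmδ δ hδ
    obtain ⟨n, hn⟩ := Ultrafilter.nonempty_of_mem
      (hconv m (ENNReal.ofReal ε) (ENNReal.ofReal_pos.mpr hε))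
    have hsub : K m ∩ g n ⁻¹' (K m) ⊆ thickening ε (Prod.fst '' ΛU) := by
      intro z hz
      obtain ⟨p, hp, hd1, _⟩ := hpoint m n ε hε hn z hz.1 hz.2
      rw [mem_thickening_iff]
      exact ⟨p.1, ⟨p, mem_iUnion.mpr ⟨m, hp⟩, rfl⟩, hd1⟩
    calc (1:ℝ≥0∞) = μ ((K m ∩ g n ⁻¹' (K m)) ∪ (K m ∩ g n ⁻¹' (K m))ᶜ) := by
          rw [union_compl_self, measure_univ]
      _ ≤ μ (K m ∩ g n ⁻¹' (K m)) + μ (K m ∩ g n ⁻¹' (K m))ᶜ := measure_union_le _ _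
      _ ≤ μ (thickening ε (Prod.fst '' ΛU)) + δ :=
          add_le_add (measure_mono hsub) ((hA m n).trans hm.le)
  obtain ⟨G, hGiso, hGΛ⟩ := extend_aux ΛU hrel hdense1
  have hGmeas : Measurable G := hGiso.continuous.measurable
  -- convergence in measure
  have hinm : ∀ ε : ℝ, 0 < ε →
      {n | μ {z | ε < dist (g n z) (G z)} ≤ ENNReal.ofReal ε} ∈ 𝒰 := by
    intro ε hε
    obtain ⟨m, hm⟩ := hmδ (ENNReal.ofReal ε) (ENNReal.ofReal_pos.mpr hε)
    apply Filter.mem_of_superset (hconv m (ENNReal.ofReal (ε/2)) (ENNReal.ofReal_pos.mpr (by positivity)))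
    intro n hn
    have hsub : {z | ε < dist (g n z) (G z)} ⊆ (K m ∩ g n ⁻¹' (K m))ᶜ := by
      intro z hz
      by_contra hzin
      rw [notMem_compl_iff] at hzin
      obtain ⟨p, hp, hd1, hd2⟩ := hpoint m n (ε/2) (by positivity) hn z hzin.1 hzin.2
      have hGp : G p.1 = p.2 := hGΛ p (mem_iUnion.mpr ⟨m, hp⟩)
      have : dist (g n z) (G z) ≤ dist (g n z) p.2 + dist (G p.1) (G z) := by
        rw [hGp]
        exact dist_triangle _ _ _
      rw [hGiso.dist_eq] at this
      have hd1' : dist p.1 z < ε/2 := dist_comm z p.1 ▸ hd1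
      have hcontra : dist (g n z) (G z) < ε := by linarith
      exact absurd hz (not_lt.mpr hcontra.le)
    exact (measure_mono hsub).trans ((hA m n).trans hm.le)
  -- surjectivity
  choose invf hinviso hinvmap hinv1 hinv2 using hinv
  have hinvmeas : ∀ n, Measurable (invf n) := fun n => (hinviso n).continuous.measurable
  have hpreinv : ∀ n (S : Set X), MeasurableSet S → μ (invf n ⁻¹' S) = μ S := by
    intro n S hS
    rw [← Measure.map_apply (hinvmeas n) hS, hinvmap n]
  have hdense2 : Dense (Prod.snd '' ΛU) := by
    apply dense_aux μ
    intro ε hε δ hδ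
    obtain ⟨m, hm⟩ := hmδ δ hδ
    obtain ⟨n, hn⟩ := Ultrafilter.nonempty_of_mem
      (hconv m (ENNReal.ofReal ε) (ENNReal.ofReal_pos.mpr hε))
    have hsub : K m ∩ invf n ⁻¹' (K m) ⊆ thickening ε (Prod.snd '' ΛU) := by
      intro z' hz'
      have hgz : g n (invf n z') = z' := hinv1 n z'
      obtain ⟨p, hp, _, hd2⟩ := hpoint m n ε hε hn (invf n z') hz'.2 (by rw [hgz]; exact hz'.1)
      rw [mem_thickening_iff]
      rw [hgz] at hd2
      exact ⟨p.2, ⟨p, mem_iUnion.mpr ⟨m, hp⟩, rfl⟩, hd2⟩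
    have hB : μ (K m ∩ invf n ⁻¹' (K m))ᶜ ≤ 2 * ((m:ℝ≥0∞))⁻¹ := by
      rw [compl_inter]
      calc μ ((K m)ᶜ ∪ (invf n ⁻¹' (K m))ᶜ) ≤ μ (K m)ᶜ + μ (invf n ⁻¹' (K m))ᶜ :=
            measure_union_le _ _
        _ = μ (K m)ᶜ + μ (K m)ᶜ := by
            rw [← preimage_compl, hpreinv n _ (hKcomp m).isClosed.measurableSet.compl]
        _ ≤ ((m:ℝ≥0∞))⁻¹ + ((m:ℝ≥0∞))⁻¹ := by gcongr <;> exact (hKlt m).le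
        _ = 2 * ((m:ℝ≥0∞))⁻¹ := (two_mul _).symm
    calc (1:ℝ≥0∞) = μ ((K m ∩ invf n ⁻¹' (K m)) ∪ (K m ∩ invf n ⁻¹' (K m))ᶜ) := by
          rw [union_compl_self, measure_univ]
      _ ≤ μ (K m ∩ invf n ⁻¹' (K m)) + μ (K m ∩ invf n ⁻¹' (K m))ᶜ := measure_union_le _ _
      _ ≤ μ (thickening ε (Prod.snd '' ΛU)) + δ :=
          add_le_add (measure_mono hsub) (hB.trans hm.le)
  have hsurj : Function.Surjective G := by
    have hrange_closed : IsClosed (Set.range G) := hGiso.isClosedEmbedding.isClosed_range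
    have hrange_dense : Dense (Set.range G) := by
      apply hdense2.mono
      rintro _ ⟨p, hp, rfl⟩
      exact ⟨p.1, hGΛ p hp⟩
    intro w
    have : w ∈ closure (Set.range G) := hrange_dense w
    rwa [hrange_closed.closure_eq] at this
  -- measure preservation
  have hmapG : Measure.map G μ = μ := by
    have hkey : ∀ F : Set X, IsClosed F → μ (G ⁻¹' F) = μ F := by
      intro F hF
      have hineq : ∀ k : ℕ,
          μ (G ⁻¹' F) ≤ μ (cthickening (1/(k+1)) F) + ENNReal.ofReal (1/(k+1)) ∧
          μ F ≤ μ (G ⁻¹' (cthickening (1/(k+1)) F)) + ENNReal.ofReal (1/(k+1)) := by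
        intro k
        have hkpos : (0:ℝ) < 1/(k+1) := by positivity
        obtain ⟨n, hn⟩ := Ultrafilter.nonempty_of_mem (hinm (1/(k+1)) hkpos)
        constructor
        · have hsub : G ⁻¹' F ⊆ {z | 1/(k+1) < dist (g n z) (G z)} ∪
              g n ⁻¹' (cthickening (1/(k+1)) F) := by
            intro z hz
            rcases lt_or_ge (1/((k:ℝ)+1)) (dist (g n z) (G z)) with h | h
            · exact Or.inl h
            · exact Or.inr (mem_cthickening_of_dist_le (g n z) (G z) _ _ hz h)
          calc μ (G ⁻¹' F) ≤ μ {z | 1/(k+1) < dist (g n z) (G z)} +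
                μ (g n ⁻¹' (cthickening (1/(k+1)) F)) :=
                (measure_mono hsub).trans (measure_union_le _ _)
            _ ≤ ENNReal.ofReal (1/(k+1)) + μ (cthickening (1/(k+1)) F) := by
                rw [hpre n _ (isClosed_cthickening).measurableSet]
                gcongr
                exact hn
            _ = μ (cthickening (1/(k+1)) F) + ENNReal.ofReal (1/(k+1)) := add_comm _ _
        · have hsub : g n ⁻¹' F ⊆ {z | 1/(k+1) < dist (g n z) (G z)} ∪
              G ⁻¹' (cthickening (1/(k+1)) F) := by
            intro z hz
            rcases lt_or_ge (1/((k:ℝ)+1)) (dist (g n z) (G z)) with h | h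
            · exact Or.inl h
            · refine Or.inr (mem_cthickening_of_dist_le (G z) (g n z) _ _ hz ?_)
              rwa [dist_comm]
          calc μ F = μ (g n ⁻¹' F) := (hpre n F hF.measurableSet).symm
            _ ≤ μ {z | 1/(k+1) < dist (g n z) (G z)} + μ (G ⁻¹' (cthickening (1/(k+1)) F)) :=
                (measure_mono hsub).trans (measure_union_le _ _)
            _ ≤ ENNReal.ofReal (1/(k+1)) + μ (G ⁻¹' (cthickening (1/(k+1)) F)) := by
                gcongr
                exact hn
            _ = μ (G ⁻¹' (cthickening (1/(k+1)) F)) + ENNReal.ofReal (1/(k+1)) := add_comm _ _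
      have hseq0 : Tendsto (fun k : ℕ => 1/((k:ℝ)+1)) atTop (𝓝 0) :=
        tendsto_one_div_add_atTop_nhds_zero_nat
      have hofReal : Tendsto (fun k : ℕ => ENNReal.ofReal (1/((k:ℝ)+1))) atTop (𝓝 0) := by
        have := (ENNReal.continuous_ofReal.tendsto 0).comp hseq0
        simpa [Function.comp_def] using this
      have hth1 : Tendsto (fun k : ℕ => μ (cthickening (1/((k:ℝ)+1)) F)) atTop (𝓝 (μ F)) :=
        (tendsto_measure_cthickening_of_isClosed ⟨1, one_pos, measure_ne_top μ _⟩ hF).comp hseq0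
      have hle1 : μ (G ⁻¹' F) ≤ μ F := by
        have hlim' : Tendsto (fun k : ℕ => μ (cthickening (1/((k:ℝ)+1)) F) +
            ENNReal.ofReal (1/((k:ℝ)+1))) atTop (𝓝 (μ F + 0)) := hth1.add hofReal
        rw [add_zero] at hlim'
        exact ge_of_tendsto hlim' (Filter.Eventually.of_forall fun k => (hineq k).1)
      have hle2 : μ F ≤ μ (G ⁻¹' F) := by
        set ν : Measure X := Measure.map G μ with hν
        haveI : IsProbabilityMeasure ν := Measure.isProbabilityMeasure_map hGmeas.aemeasurable
        have hνeq : ∀ r : ℝ, μ (G ⁻¹' (cthickening r F)) = ν (cthickening r F) := by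
          intro r
          rw [hν, Measure.map_apply hGmeas (isClosed_cthickening).measurableSet]
        have hth2 : Tendsto (fun k : ℕ => ν (cthickening (1/((k:ℝ)+1)) F)) atTop (𝓝 (ν F)) :=
          (tendsto_measure_cthickening_of_isClosed ⟨1, one_pos, measure_ne_top ν _⟩ hF).comp hseq0
        have hlim' : Tendsto (fun k : ℕ => μ (G ⁻¹' (cthickening (1/((k:ℝ)+1)) F)) +
            ENNReal.ofReal (1/((k:ℝ)+1))) atTop (𝓝 (ν F + 0)) := by
          simp only [hνeq]
          exact hth2.add hofReal
        rw [add_zero] at hlim'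
        have := ge_of_tendsto hlim' (Filter.Eventually.of_forall fun k => (hineq k).2)
        rwa [hν, Measure.map_apply hGmeas hF.measurableSet] at this
      exact le_antisymm hle1 hle2
    have hgen : (inferInstance : MeasurableSpace X) =
        MeasurableSpace.generateFrom {s : Set X | IsClosed s} := by
      rw [BorelSpace.measurable_eq (α := X)]
      exact borel_eq_generateFrom_isClosed
    apply MeasureTheory.ext_of_generate_finite _ hgen
    · exact fun s hs t ht _ => hs.inter ht
    · intro s hs
      rw [Measure.map_apply hGmeas hs.measurableSet]
      exact hkey s hs
    · haveI : IsProbabilityMeasure (Measure.map G μ) :=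
        Measure.isProbabilityMeasure_map hGmeas.aemeasurable
      simp [measure_univ]
  -- building the subsequence
  have hKFmem : ∀ k : ℕ, {n | kyFan μ (g n) G ≤ 1/(k+1)} ∩ {n | k ≤ n} ∈ 𝒰 := by
    intro k
    have hkpos : (0:ℝ) < 1/(k+1) := by positivity
    have h1 : {n | kyFan μ (g n) G ≤ 1/(k+1)} ∈ 𝒰 := by
      apply Filter.mem_of_superset (hinm (1/(k+1)) hkpos)
      intro n hn
      exact kyFan_le μ _ _ hkpos.le hn
    have h2 : {n | k ≤ n} ∈ 𝒰 := h𝒰 (mem_atTop k)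
    exact inter_mem h1 h2
  have hnseq : ∀ k : ℕ, ∃ n, kyFan μ (g n) G ≤ 1/(k+1) ∧ k ≤ n := by
    intro k
    obtain ⟨n, hn1, hn2⟩ := Ultrafilter.nonempty_of_mem (hKFmem k)
    exact ⟨n, hn1, hn2⟩
  choose nseq hnKF hnge using hnseq
  -- pointwise convergence
  have hpt : ∀ z, Tendsto (fun k => g (nseq k) z) atTop (𝓝 (G z)) := by
    intro z
    rw [Metric.tendsto_atTop]
    intro η hη
    have hball : 0 < μ (ball z (η/4)) :=
      Metric.isOpen_ball.measure_pos μ (nonempty_ball.mpr (by positivity))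
    set t := (μ (ball z (η/4))).toReal with ht
    have htpos : 0 < t := ENNReal.toReal_pos hball.ne' (measure_ne_top μ _)
    set c := min (η/4) (t/2) with hc
    have hcpos : 0 < c := lt_min (by positivity) (by positivity)
    have hcball : ENNReal.ofReal c < μ (ball z (η/4)) := by
      calc ENNReal.ofReal c ≤ ENNReal.ofReal (t/2) := ENNReal.ofReal_le_ofReal (min_le_right _ _)
        _ < ENNReal.ofReal t := (ENNReal.ofReal_lt_ofReal_iff htpos).mpr (by linarith)
        _ = μ (ball z (η/4)) := ENNReal.ofReal_toReal (measure_ne_top μ _)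
    obtain ⟨N, hN⟩ := exists_nat_one_div_lt hcpos
    refine ⟨N, fun k hk => ?_⟩
    have hky : kyFan μ (g (nseq k)) G < c := by
      calc kyFan μ (g (nseq k)) G ≤ 1/(k+1) := hnKF k
        _ ≤ 1/(N+1) := by
            apply one_div_le_one_div_of_le (by positivity)
            have : (N:ℝ) ≤ k := Nat.cast_le.mpr hk
            linarith
        _ < c := hN
    have hmeasc := measure_le_of_kyFan_lt μ _ _ hky
    have hexists : ∃ w ∈ ball z (η/4), dist (g (nseq k) w) (G w) ≤ c := by
      by_contra hcon
      push_neg at hcon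
      have : ball z (η/4) ⊆ {w | c < dist (g (nseq k) w) (G w)} :=
        fun w hw => hcon w hw
      exact absurd ((measure_mono this).trans hmeasc) (not_le.mpr hcball)
    obtain ⟨w, hwball, hwdist⟩ := hexists
    have hdzw : dist z w < η/4 := by
      rw [← dist_comm w z]
      exact mem_ball.mp hwball
    calc dist (g (nseq k) z) (G z) ≤ dist (g (nseq k) z) (g (nseq k) w) +
          dist (g (nseq k) w) (G w) + dist (G w) (G z) := dist_triangle4 _ _ _ _
      _ = dist z w + dist (g (nseq k) w) (G w) + dist w z := by
          rw [(hiso (nseq k)).dist_eq, hGiso.dist_eq]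
      _ ≤ η/4 + c + η/4 := by
          have h1 : dist w z < η/4 := mem_ball.mp hwball
          apply add_le_add (add_le_add hdzw.le hwdist) h1.le
      _ < η := by
          have : c ≤ η/4 := min_le_left _ _
          linarith
  exact ⟨G, nseq, ⟨hGiso, ⟨hGiso.injective, hsurj⟩, hmapG⟩, hnge, hnKF, hpt⟩

end Main

/-- for a Ky Fan-closed subgroup `G ⊆ Aut(X)`, every orbit is closed;
in particular the quotient pseudometric separates orbits, i.e. it is a metric. -/
theorem stmt_11 {X : Type*} [MetricSpace X] [CompleteSpace X] [SeparableSpace X] [MeasurableSpace X] [BorelSpace X]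
    (μ : Measure X) [IsProbabilityMeasure μ] [μ.IsOpenPosMeasure]
    (G : Set (X → X)) (hG : IsClosedAutSubgroup μ G) :
    (∀ x : X, IsClosed {y : X | ∃ g ∈ G, g x = y}) ∧
    (∀ x x' : X, sInf ((fun g : X → X => dist (g x) x') '' G) = 0 → ∃ g ∈ G, g x = x') := by
  have key : ∀ x y : X, y ∈ closure {y : X | ∃ g ∈ G, g x = y} → ∃ g ∈ G, g x = y := by
    intro x y hy
    haveI : Nonempty X := ⟨x⟩
    obtain ⟨yseq, hymem, hytend⟩ := mem_closure_iff_seq_limit.mp hy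
    choose gseq hgG hgx using hymem
    obtain ⟨h1, hid, hcomp, hinvG, hclosed⟩ := hG
    have hiso : ∀ n, Isometry (gseq n) := fun n => (h1 _ (hgG n)).1
    have hmap : ∀ n, Measure.map (gseq n) μ = μ := fun n => (h1 _ (hgG n)).2.2
    have hinv : ∀ n, ∃ h : X → X, Isometry h ∧ Measure.map h μ = μ ∧
        (∀ z, gseq n (h z) = z) ∧ (∀ z, h (gseq n z) = z) := by
      intro n
      obtain ⟨h, hhG, hc1, hc2⟩ := hinvG _ (hgG n)
      exact ⟨h, (h1 _ hhG).1, (h1 _ hhG).2.2,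
        fun z => congrFun hc2 z, fun z => congrFun hc1 z⟩
    obtain ⟨Gg, nseq, hAut, hge, hKF, hpt⟩ := conv_aux μ gseq hiso hmap hinv
    have hGgG : Gg ∈ G := by
      apply hclosed (fun k => gseq (nseq k)) Gg (fun k => hgG _) hAut
      apply squeeze_zero (fun k => kyFan_nonneg μ _ _) hKF
      exact tendsto_one_div_add_atTop_nhds_zero_nat
    refine ⟨Gg, hGgG, ?_⟩
    have T1 : Tendsto (fun k => gseq (nseq k) x) atTop (𝓝 (Gg x)) := hpt x
    have hnseqtend : Tendsto nseq atTop atTop := tendsto_atTop_mono hge tendsto_id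
    have T2 : Tendsto (fun k => gseq (nseq k) x) atTop (𝓝 y) :=
      (hytend.comp hnseqtend).congr fun k => (hgx (nseq k)).symm
    exact tendsto_nhds_unique T1 T2
  constructor
  · intro x
    apply isClosed_of_closure_subset
    intro y hy
    exact key x y hy
  · intro x x' h
    apply key x x'
    rw [Metric.mem_closure_iff]
    intro ε hε
    have hne : ((fun g : X → X => dist (g x) x') '' G).Nonempty :=
      ⟨_, mem_image_of_mem _ hG.2.1⟩
    obtain ⟨r, ⟨g0, hg0, rfl⟩, hr⟩ := exists_lt_of_csInf_lt hne (by rw [h]; exact hε)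
    exact ⟨g0 x, ⟨g0, hg0, rfl⟩, by rw [dist_comm]; exact hr⟩

end
end

section
/- Let X and Y be mm-spaces, let ε, δ, v > 0, let π be a coupling of μ_X and μ_Y, and let S ⊆ X×Y be a closed set such that π(S) ≥ 1 − δ and |d_X(x₁,x₂) − d_Y(y₁,y₂)| ≤ ε for all (x₁,y₁), (x₂,y₂) ∈ S. Then: (a) for every (x,y) ∈ S with μ_Y(B_ε(y)) > v one has μ_X(B_{3ε}(x)) > v − δ; and consequently (b) μ_X({x ∈ X : μ_X(B_{3ε}(x)) > v − δ}) ≥ μ_Y({y ∈ Y : μ_Y(B_ε(y)) > v}) − δ. Here B_r(z) denotes the open ball of radius r about z. -/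
open MeasureTheory Metric Filter Set TopologicalSpace
open scoped ENNReal Topology

noncomputable section

lemma aux_isOpen_measure_ball_gt {Z : Type*} [PseudoMetricSpace Z] [MeasurableSpace Z]
    (μ : Measure Z) (r : ℝ) (c : ℝ≥0∞) : IsOpen {z | c < μ (ball z r)} := by
  rw [Metric.isOpen_iff]
  intro z hz
  have hun : ball z r = ⋃ n : ℕ, ball z (r - 1 / (n + 1)) := by
    ext w
    simp only [mem_iUnion, mem_ball]
    constructor
    · intro h
      obtain ⟨n, hn⟩ := exists_nat_one_div_lt (show (0:ℝ) < r - dist w z by linarith)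
      exact ⟨n, by push_cast at hn ⊢; linarith⟩
    · rintro ⟨n, hn⟩
      have : 0 < 1 / ((n:ℝ) + 1) := by positivity
      linarith
  have hmono : Monotone fun n : ℕ => ball z (r - 1 / (n + 1)) := by
    intro m n h
    apply ball_subset_ball
    have h1 : (1:ℝ) / ((n:ℝ) + 1) ≤ 1 / ((m:ℝ) + 1) := by
      apply one_div_le_one_div_of_le (by positivity)
      exact_mod_cast by omega
    linarith
  simp only [mem_setOf_eq] at hz
  rw [hun, hmono.directed_le.measure_iUnion] at hz
  obtain ⟨n, hn⟩ := lt_iSup_iff.mp hz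
  refine ⟨1 / (n + 1), by positivity, ?_⟩
  intro w hw
  simp only [mem_setOf_eq]
  refine lt_of_lt_of_le hn (measure_mono ?_)
  intro u hu
  simp only [mem_ball] at hu hw ⊢
  have := dist_triangle u z w
  have := dist_comm z w
  calc dist u w ≤ dist u z + dist z w := dist_triangle u z w
    _ = dist u z + dist w z := by rw [dist_comm z w]
    _ < r := by linarith

/-- thick parts under an ε-isometric coupling (Lemma `lem:Xneps`):
(a) points of `S` paired with `v`-thick points of `Y` are `(v-δ)`-thick in `X`;
(b) consequently the measure of the thick part of `X` is at least that of `Y` minus δ. -/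
theorem stmt_12 {X Y : Type*} [MetricSpace X] [CompleteSpace X] [SeparableSpace X] [MeasurableSpace X] [BorelSpace X]
    (μX : Measure X) [IsProbabilityMeasure μX] [μX.IsOpenPosMeasure]
    [MetricSpace Y] [CompleteSpace Y] [SeparableSpace Y] [MeasurableSpace Y] [BorelSpace Y]
    (μY : Measure Y) [IsProbabilityMeasure μY] [μY.IsOpenPosMeasure]
    (ε δ v : ℝ) (hε : 0 < ε) (hδ : 0 < δ) (hv : 0 < v)
    (π : Measure (X × Y)) (hπ : π ∈ couplings μX μY)
    (S : Set (X × Y)) (hScl : IsClosed S)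
    (hπS : 1 - ENNReal.ofReal δ ≤ π S)
    (hdist : ∀ p ∈ S, ∀ q ∈ S, |dist p.1 q.1 - dist p.2 q.2| ≤ ε) :
    (∀ p ∈ S, ENNReal.ofReal v < μY (ball p.2 ε) →
      ENNReal.ofReal (v - δ) < μX (ball p.1 (3 * ε))) ∧
    μY {y : Y | ENNReal.ofReal v < μY (ball y ε)} ≤
      μX {x : X | ENNReal.ofReal (v - δ) < μX (ball x (3 * ε))} + ENNReal.ofReal δ := by
  have hprob : π Set.univ = 1 := by
    have := Measure.map_apply (μ := π) measurable_fst MeasurableSet.univ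
    rw [hπ.1] at this
    simpa using this.symm
  have hπprob : IsProbabilityMeasure π := ⟨hprob⟩
  have hSc : π Sᶜ ≤ ENNReal.ofReal δ := by
    have hScompl : π Sᶜ = 1 - π S := by
      rw [measure_compl hScl.measurableSet (measure_ne_top π S), hprob]
    rw [hScompl]
    by_cases hd1 : ENNReal.ofReal δ ≤ 1
    · calc (1:ℝ≥0∞) - π S ≤ 1 - (1 - ENNReal.ofReal δ) := tsub_le_tsub_left hπS 1
        _ = ENNReal.ofReal δ := ENNReal.sub_sub_cancel ENNReal.one_ne_top hd1
    · exact le_trans tsub_le_self (le_of_not_ge hd1)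
  have ha : ∀ p ∈ S, ENNReal.ofReal v < μY (ball p.2 ε) →
      ENNReal.ofReal (v - δ) < μX (ball p.1 (3 * ε)) := by
    intro p hp hball
    by_cases hvδ : v ≤ δ
    · have h0 : ENNReal.ofReal (v - δ) = 0 := by
        rw [ENNReal.ofReal_eq_zero]; linarith
      rw [h0]
      exact measure_ball_pos μX p.1 (by linarith)
    · push_neg at hvδ
      set A := Prod.snd ⁻¹' (ball p.2 ε) with hAdef
      have hA : π A = μY (ball p.2 ε) := by
        rw [← hπ.2, Measure.map_apply measurable_snd measurableSet_ball]
      have hsub : S ∩ A ⊆ Prod.fst ⁻¹' (ball p.1 (3 * ε)) := by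
        rintro q ⟨hqS, hqA⟩
        have h1 := hdist q hqS p hp
        have h2 : dist q.2 p.2 < ε := hqA
        have h3 := abs_le.mp h1
        simp only [mem_preimage, mem_ball]
        linarith [h3.1, h3.2]
      have key : π A ≤ π (S ∩ A) + ENNReal.ofReal δ := by
        calc π A ≤ π ((S ∩ A) ∪ Sᶜ) := by
              apply measure_mono
              intro q hq
              by_cases hqS : q ∈ S
              · exact Or.inl ⟨hqS, hq⟩
              · exact Or.inr hqS
          _ ≤ π (S ∩ A) + π Sᶜ := measure_union_le _ _
          _ ≤ π (S ∩ A) + ENNReal.ofReal δ := add_le_add_right hSc _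
      have h4 : ENNReal.ofReal v < π (S ∩ A) + ENNReal.ofReal δ := by
        rw [← hA] at hball; exact lt_of_lt_of_le hball key
      have h5 : ENNReal.ofReal (v - δ) < π (S ∩ A) := by
        rw [ENNReal.ofReal_sub v hδ.le]
        rw [ENNReal.sub_lt_iff_lt_right ENNReal.ofReal_ne_top
          (ENNReal.ofReal_le_ofReal hvδ.le)]
        exact h4
      calc ENNReal.ofReal (v - δ) < π (S ∩ A) := h5
        _ ≤ π (Prod.fst ⁻¹' (ball p.1 (3 * ε))) := measure_mono hsub
        _ = μX (ball p.1 (3 * ε)) := by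
            rw [← hπ.1, Measure.map_apply measurable_fst measurableSet_ball]
  refine ⟨ha, ?_⟩
  set T := {y : Y | ENNReal.ofReal v < μY (ball y ε)} with hTdef
  set U := {x : X | ENNReal.ofReal (v - δ) < μX (ball x (3 * ε))} with hUdef
  have hTopen : IsOpen T := aux_isOpen_measure_ball_gt μY ε _
  have hUopen : IsOpen U := aux_isOpen_measure_ball_gt μX (3 * ε) _
  have hT : μY T = π (Prod.snd ⁻¹' T) := by
    rw [← hπ.2, Measure.map_apply measurable_snd hTopen.measurableSet]
  have hU : μX U = π (Prod.fst ⁻¹' U) := by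
    rw [← hπ.1, Measure.map_apply measurable_fst hUopen.measurableSet]
  have hsub : S ∩ Prod.snd ⁻¹' T ⊆ Prod.fst ⁻¹' U := by
    rintro q ⟨hqS, hqT⟩
    exact ha q hqS hqT
  calc μY T = π (Prod.snd ⁻¹' T) := hT
    _ ≤ π ((S ∩ Prod.snd ⁻¹' T) ∪ Sᶜ) := by
        apply measure_mono
        intro q hq
        by_cases hqS : q ∈ S
        · exact Or.inl ⟨hqS, hq⟩
        · exact Or.inr hqS
    _ ≤ π (S ∩ Prod.snd ⁻¹' T) + π Sᶜ := measure_union_le _ _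
    _ ≤ π (Prod.fst ⁻¹' U) + ENNReal.ofReal δ :=
        add_le_add (measure_mono hsub) hSc
    _ = μX U + ENNReal.ofReal δ := by rw [hU]


end
end
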